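/- arXiv:1504.05791 — 8 statements merged into one kernel-verified Lean document; each statement's English description precedes it below -/
import Mathlib

section
/- Let a, b, c, d, p, q, r be real numbers with a > 0, b > 0, c ≥ 0, d ≥ 0, p ≥ 0, r ≥ 0, q > 0 and q ≥ |p − r|. Define f(u,v) = u^r v^p (a v^q − c u^q) and g(u,v) = v^r u^p (b u^q − d v^q) for u, v ≥ 0. Then there exists a real number K > 0 such that for all u, v ≥ 0 one has (f(u,v) − K g(u,v)) · (u − K v) ≤ 0. -/
/-!
Both `f` and `g` are homogeneous of degree `p + q + r`, so with `u = s v` and `m = max p r`,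
`f - K g = v ^ (p + q + r) * s ^ m * χ_K(s)` where
`χ_K(s) = a s^(r-m) + K d s^(p-m) - c s^(r+q-m) - K b s^(p+q-m)`.
Since `|p - r| ≤ q`, the first two exponents are `≤ 0` and the last two `≥ 0`, so `χ_K` is
antitone on `(0, ∞)` and `f - K g` changes sign exactly where `u - K v` does, provided
`χ_K(K) = 0`. Such a `K` exists by the intermediate value theorem: `χ_k(k)` is nonnegative for
small `k` (where `a k^(r-m)` dominates) and nonpositive for large `k` (where `b k^(p+q+1-m)`
dominates).
-/

open Real Set Filter Topology

noncomputable section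

variable (a b c d p q r : ℝ)

def flux (K u v : ℝ) : ℝ :=
  u ^ r * v ^ p * (a * v ^ q - c * u ^ q) - K * (v ^ r * u ^ p * (b * u ^ q - d * v ^ q))

-- `χ_K(s) = s ^ (-m) * flux K s 1` in the notation of the header.
def profile (m K s : ℝ) : ℝ :=
  a * s ^ (r - m) + K * d * s ^ (p - m) - c * s ^ (r + q - m) - K * b * s ^ (p + q - m)

variable {a b c d p q r}

lemma flux_mul_right (m : ℝ) {K s v : ℝ} (hs : 0 < s) (hv : 0 < v) :
    flux a b c d p q r K (s * v) v = v ^ (p + q + r) * s ^ m * profile a b c d p q r m K s := by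
  simp only [flux, profile, mul_rpow hs.le hv.le, rpow_add hs, rpow_add hv, rpow_sub hs]
  field_simp
  ring

lemma profile_antitoneOn {m K : ℝ} (ha : 0 ≤ a) (hb : 0 ≤ b) (hc : 0 ≤ c) (hd : 0 ≤ d)
    (hK : 0 ≤ K) (hrm : r ≤ m) (hpm : p ≤ m) (hmr : m ≤ r + q) (hmp : m ≤ p + q) :
    AntitoneOn (profile a b c d p q r m K) (Ioi 0) := by
  intro x (hx : 0 < x) y _ hxy
  have h₁ : y ^ (r - m) ≤ x ^ (r - m) := rpow_le_rpow_of_nonpos hx hxy (by linarith)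
  have h₂ : y ^ (p - m) ≤ x ^ (p - m) := rpow_le_rpow_of_nonpos hx hxy (by linarith)
  have h₃ : x ^ (r + q - m) ≤ y ^ (r + q - m) := rpow_le_rpow hx.le hxy (by linarith)
  have h₄ : x ^ (p + q - m) ≤ y ^ (p + q - m) := rpow_le_rpow hx.le hxy (by linarith)
  simp only [profile]
  gcongr

lemma continuousOn_profile_self (m : ℝ) :
    ContinuousOn (fun k => profile a b c d p q r m k k) (Ioi 0) := by
  unfold profile
  fun_prop (disch := exact fun x (hx : 0 < x) => hx.ne')

lemma profile_self_nonneg {m k : ℝ} (hd : 0 ≤ d) (hk : 0 < k)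
    (h : c * k ^ q + b * k ^ (p + q + 1 - r) ≤ a) : 0 ≤ profile a b c d p q r m k k := by
  have hsplit : profile a b c d p q r m k k
      = k ^ (r - m) * (a - c * k ^ q - b * k ^ (p + q + 1 - r)) + d * k ^ (p - m + 1) := by
    simp only [profile, rpow_add hk, rpow_sub hk, rpow_one]
    field_simp
    ring
  have : 0 ≤ a - c * k ^ q - b * k ^ (p + q + 1 - r) := by linarith
  rw [hsplit]
  positivity

lemma profile_self_nonpos {m k : ℝ} (hc : 0 ≤ c) (hk : 0 < k)
    (ha : a ≤ b / 2 * k ^ (p + q + 1 - r)) (hd : d ≤ b / 2 * k ^ q) :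
    profile a b c d p q r m k k ≤ 0 := by
  have hsplit : profile a b c d p q r m k k = k ^ (r - m) * (a - b / 2 * k ^ (p + q + 1 - r))
      + k ^ (p - m + 1) * (d - b / 2 * k ^ q) - c * k ^ (r + q - m) := by
    simp only [profile, rpow_add hk, rpow_sub hk, rpow_one]
    field_simp
    ring
  have h₁ : k ^ (r - m) * (a - b / 2 * k ^ (p + q + 1 - r)) ≤ 0 :=
    mul_nonpos_of_nonneg_of_nonpos (by positivity) (by linarith)
  have h₂ : k ^ (p - m + 1) * (d - b / 2 * k ^ q) ≤ 0 :=
    mul_nonpos_of_nonneg_of_nonpos (by positivity) (by linarith)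
  have h₃ : 0 ≤ c * k ^ (r + q - m) := by positivity
  linarith

lemma exists_profile_self_eq_zero (ha : 0 < a) (hb : 0 < b) (hc : 0 ≤ c) (hd : 0 ≤ d)
    (hq : 0 < q) (hrq : r ≤ p + q) (m : ℝ) : ∃ K > 0, profile a b c d p q r m K K = 0 := by
  have he : 0 < p + q + 1 - r := by linarith
  have hcont : Continuous fun k : ℝ => c * k ^ q + b * k ^ (p + q + 1 - r) :=
    (continuous_const.mul (continuous_rpow_const hq.le)).add
      (continuous_const.mul (continuous_rpow_const he.le))
  have hsmall : Tendsto (fun k : ℝ => c * k ^ q + b * k ^ (p + q + 1 - r)) (𝓝[>] 0) (𝓝 0) :=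
    (hcont.tendsto' 0 0 (by simp [zero_rpow hq.ne', zero_rpow he.ne'])).mono_left
      nhdsWithin_le_nhds
  obtain ⟨k₀, hk₀a, hk₀⟩ :=
    ((hsmall.eventually (eventually_le_nhds ha)).and self_mem_nhdsWithin).exists
  obtain ⟨k₁, ⟨hk₁a, hk₁d⟩, hk₁⟩ :=
    ((((tendsto_rpow_atTop he).const_mul_atTop (half_pos hb)).eventually_ge_atTop a).and
      (((tendsto_rpow_atTop hq).const_mul_atTop (half_pos hb)).eventually_ge_atTop d) |>.and
      (eventually_gt_atTop 0)).exists
  exact isPreconnected_Ioi.intermediate_value hk₁ hk₀ (continuousOn_profile_self m)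
    ⟨profile_self_nonpos hc hk₁ hk₁a hk₁d, profile_self_nonneg hd hk₀ hk₀a⟩

lemma AntitoneOn.mul_sub_nonpos_of_eq_zero {S : Set ℝ} {f : ℝ → ℝ} {K s : ℝ}
    (hf : AntitoneOn f S) (hK : K ∈ S) (hs : s ∈ S) (hfK : f K = 0) : f s * (s - K) ≤ 0 := by
  rcases le_total s K with h | h
  · exact mul_nonpos_of_nonneg_of_nonpos (hfK ▸ hf hs hK h) (by linarith)
  · exact mul_nonpos_of_nonpos_of_nonneg (hfK ▸ hf hK hs h) (by linarith)

lemma flux_mul_sub_nonpos {m K u v : ℝ} (ha : 0 ≤ a) (hb : 0 ≤ b) (hc : 0 ≤ c) (hd : 0 ≤ d)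
    (hq : 0 < q) (hrm : r ≤ m) (hpm : p ≤ m) (hmr : m ≤ r + q) (hmp : m ≤ p + q) (hK : 0 < K)
    (hroot : profile a b c d p q r m K K = 0) (hu : 0 ≤ u) (hv : 0 ≤ v) :
    flux a b c d p q r K u v * (u - K * v) ≤ 0 := by
  rcases hv.eq_or_lt with rfl | hv
  · have hflux : flux a b c d p q r K u 0
        = -(c * u ^ r * 0 ^ p * u ^ q) - K * b * 0 ^ r * u ^ p * u ^ q := by
      simp only [flux, zero_rpow hq.ne']
      ring
    have h₁ : 0 ≤ c * u ^ r * 0 ^ p * u ^ q := by positivity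
    have h₂ : 0 ≤ K * b * 0 ^ r * u ^ p * u ^ q := by positivity
    exact mul_nonpos_of_nonpos_of_nonneg (by linarith) (by simpa using hu)
  rcases hu.eq_or_lt with rfl | hu
  · have hflux : flux a b c d p q r K 0 v
        = a * 0 ^ r * v ^ p * v ^ q + K * d * v ^ r * 0 ^ p * v ^ q := by
      simp only [flux, zero_rpow hq.ne']
      ring
    exact mul_nonpos_of_nonneg_of_nonpos (hflux ▸ by positivity) (by nlinarith)
  obtain ⟨s, hs, rfl⟩ : ∃ s > 0, u = s * v :=
    ⟨u / v, div_pos hu hv, (div_mul_cancel₀ u hv.ne').symm⟩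
  have hanti := profile_antitoneOn ha hb hc hd hK.le hrm hpm hmr hmp
  calc flux a b c d p q r K (s * v) v * (s * v - K * v)
      = v ^ (p + q + r) * s ^ m * v * (profile a b c d p q r m K s * (s - K)) := by
        rw [flux_mul_right m hs hv]
        ring
    _ ≤ 0 := mul_nonpos_of_nonneg_of_nonpos (by positivity)
        (hanti.mul_sub_nonpos_of_eq_zero hK hs hroot)

end

theorem stmt_0_general (a b c d p q r : ℝ)
    (ha : 0 < a) (hb : 0 < b) (hc : 0 ≤ c) (hd : 0 ≤ d)
    (hq : 0 < q) (hqpr : |p - r| ≤ q) :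
    ∃ K : ℝ, 0 < K ∧ ∀ u v : ℝ, 0 ≤ u → 0 ≤ v →
      (u ^ r * v ^ p * (a * v ^ q - c * u ^ q)
        - K * (v ^ r * u ^ p * (b * u ^ q - d * v ^ q))) * (u - K * v) ≤ 0 := by
  obtain ⟨hrp, hpr⟩ := abs_le.mp hqpr
  have hrq : r ≤ p + q := by linarith
  obtain ⟨K, hK, hroot⟩ := exists_profile_self_eq_zero ha hb hc hd hq hrq (max p r)
  have hrm : r ≤ max p r := le_max_right p r
  have hpm : p ≤ max p r := le_max_left p r
  have hmr : max p r ≤ r + q := max_le (by linarith) (by linarith)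
  have hmp : max p r ≤ p + q := max_le (by linarith) (by linarith)
  exact ⟨K, hK, fun u v hu hv =>
    flux_mul_sub_nonpos ha.le hb.le hc hd hq hrm hpm hmr hmp hK hroot hu hv⟩

/-- existence of the proportionality constant K such that
`(f(u,v) - K g(u,v)) * (u - K v) ≤ 0` on the nonnegative quadrant. -/
theorem stmt_0 (a b c d p q r : ℝ)
    (ha : 0 < a) (hb : 0 < b) (hc : 0 ≤ c) (hd : 0 ≤ d)
    (hp : 0 ≤ p) (hr : 0 ≤ r) (hq : 0 < q) (hqpr : |p - r| ≤ q) :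
    ∃ K : ℝ, 0 < K ∧ ∀ u v : ℝ, 0 ≤ u → 0 ≤ v →
      (u ^ r * v ^ p * (a * v ^ q - c * u ^ q)
        - K * (v ^ r * u ^ p * (b * u ^ q - d * v ^ q))) * (u - K * v) ≤ 0 :=
  stmt_0_general a b c d p q r ha hb hc hd hq hqpr
end

section
/- Let a, b, c, d, p, q, r be real numbers with a > 0, b > 0, c ≥ 0, d ≥ 0, p ≥ 0, r ≥ 0, q > 0, q ≥ |p − r| and additionally a·b ≥ c·d. Define f(u,v) = u^r v^p (a v^q − c u^q) and g(u,v) = v^r u^p (b u^q − d v^q) for u, v ≥ 0. Then the positive constant K such that (f(u,v) − K g(u,v))·(u − K v) ≤ 0 for all u, v ≥ 0 is unique: if K₁ > 0 and K₂ > 0 both satisfy this property then K₁ = K₂. -/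
/-!
Put `v = 1`. If `K₁ < K₂` both have the property, then for every `t` strictly between them the
two sign conditions force `f(t,1) ≤ 0` and `g(t,1) ≤ 0`, i.e. `a ≤ c t^q` and `b t^q ≤ d`.
For two such points `t₁ < t₂` this gives `ab t₂^q ≤ c t₁^q b t₂^q ≤ cd t₁^q ≤ ab t₁^q`,
contradicting the strict monotonicity of `t ↦ t^q`.
-/

open Real

noncomputable def reactionF (a c p q r : ℝ) (u v : ℝ) : ℝ := u ^ r * v ^ p * (a * v ^ q - c * u ^ q)

noncomputable def reactionG (b d p q r : ℝ) (u v : ℝ) : ℝ := v ^ r * u ^ p * (b * u ^ q - d * v ^ q)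

def IsSeparatingConstant (f g : ℝ → ℝ → ℝ) (K : ℝ) : Prop :=
  ∀ u v : ℝ, 0 ≤ u → 0 ≤ v → (f u v - K * g u v) * (u - K * v) ≤ 0

lemma nonpos_and_nonpos_of_mul_sub_mul_nonpos {x y t L₁ L₂ : ℝ} (hL₁ : 0 ≤ L₁)
    (ht₁ : L₁ < t) (ht₂ : t < L₂)
    (H₁ : (x - L₁ * y) * (t - L₁) ≤ 0) (H₂ : (x - L₂ * y) * (t - L₂) ≤ 0) :
    x ≤ 0 ∧ y ≤ 0 := by
  have h₁ : x - L₁ * y ≤ 0 := nonpos_of_mul_nonpos_left H₁ (sub_pos.2 ht₁)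
  have h₂ : 0 ≤ x - L₂ * y := nonneg_of_mul_nonpos_left H₂ (sub_neg.2 ht₂)
  have hy : y ≤ 0 := by nlinarith
  exact ⟨by nlinarith, hy⟩

lemma IsSeparatingConstant.nonpos_of_mem_Ioo {f g : ℝ → ℝ → ℝ} {K₁ K₂ t : ℝ} (hK₁ : 0 ≤ K₁)
    (h₁ : IsSeparatingConstant f g K₁) (h₂ : IsSeparatingConstant f g K₂)
    (ht : t ∈ Set.Ioo K₁ K₂) : f t 1 ≤ 0 ∧ g t 1 ≤ 0 := by
  have ht₀ : 0 ≤ t := hK₁.trans ht.1.le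
  refine nonpos_and_nonpos_of_mul_sub_mul_nonpos hK₁ ht.1 ht.2 ?_ ?_
  · simpa using h₁ t 1 ht₀ zero_le_one
  · simpa using h₂ t 1 ht₀ zero_le_one

lemma not_le_mul_and_mul_le {a b c d s t : ℝ} (ha : 0 < a) (hb : 0 < b)
    (habcd : c * d ≤ a * b) (hs : 0 ≤ s) (hst : s < t) :
    ¬ (a ≤ c * s ∧ b * t ≤ d) := by
  rintro ⟨has, hbt⟩
  have hcs : 0 ≤ c * s := ha.le.trans has
  refine lt_irrefl (a * b * t) ?_
  calc a * b * t = a * (b * t) := by ring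
    _ ≤ c * s * (b * t) := mul_le_mul_of_nonneg_right has (mul_pos hb (hs.trans_lt hst)).le
    _ ≤ c * s * d := mul_le_mul_of_nonneg_left hbt hcs
    _ = c * d * s := by ring
    _ ≤ a * b * s := mul_le_mul_of_nonneg_right habcd hs
    _ < a * b * t := mul_lt_mul_of_pos_left hst (mul_pos ha hb)

lemma reaction_sign_conditions {a b c d p q r t : ℝ} (ht : 0 < t)
    (hf : reactionF a c p q r t 1 ≤ 0) (hg : reactionG b d p q r t 1 ≤ 0) :
    a ≤ c * t ^ q ∧ b * t ^ q ≤ d := by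
  simp only [reactionF, reactionG, one_rpow, mul_one, one_mul] at hf hg
  constructor
  · linarith [nonpos_of_mul_nonpos_right hf (rpow_pos_of_pos ht r)]
  · linarith [nonpos_of_mul_nonpos_right hg (rpow_pos_of_pos ht p)]

lemma IsSeparatingConstant.reaction_not_lt {a b c d p q r K₁ K₂ : ℝ} (ha : 0 < a) (hb : 0 < b)
    (hq : 0 < q) (habcd : c * d ≤ a * b) (hK₁ : 0 ≤ K₁)
    (h₁ : IsSeparatingConstant (reactionF a c p q r) (reactionG b d p q r) K₁)
    (h₂ : IsSeparatingConstant (reactionF a c p q r) (reactionG b d p q r) K₂) :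
    ¬ K₁ < K₂ := by
  intro hK
  obtain ⟨t₁, ht₁⟩ := exists_between hK
  obtain ⟨t₂, ht₂⟩ := exists_between ht₁.2
  have ht₁₀ : 0 < t₁ := hK₁.trans_lt ht₁.1
  have hsign (t : ℝ) (ht : t ∈ Set.Ioo K₁ K₂) : a ≤ c * t ^ q ∧ b * t ^ q ≤ d :=
    let ⟨hf, hg⟩ := h₁.nonpos_of_mem_Ioo hK₁ h₂ ht
    reaction_sign_conditions (hK₁.trans_lt ht.1) hf hg
  exact not_le_mul_and_mul_le ha hb habcd (rpow_nonneg ht₁₀.le q)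
    (rpow_lt_rpow ht₁₀.le ht₂.1 hq)
    ⟨(hsign t₁ ht₁).1, (hsign t₂ ⟨ht₁.1.trans ht₂.1, ht₂.2⟩).2⟩

theorem stmt_1_general (a b c d p q r : ℝ)
    (ha : 0 < a) (hb : 0 < b)
    (hq : 0 < q)
    (habcd : c * d ≤ a * b) (K₁ K₂ : ℝ) (hK₁ : 0 < K₁) (hK₂ : 0 < K₂)
    (h₁ : ∀ u v : ℝ, 0 ≤ u → 0 ≤ v →
      (u ^ r * v ^ p * (a * v ^ q - c * u ^ q)
        - K₁ * (v ^ r * u ^ p * (b * u ^ q - d * v ^ q))) * (u - K₁ * v) ≤ 0)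
    (h₂ : ∀ u v : ℝ, 0 ≤ u → 0 ≤ v →
      (u ^ r * v ^ p * (a * v ^ q - c * u ^ q)
        - K₂ * (v ^ r * u ^ p * (b * u ^ q - d * v ^ q))) * (u - K₂ * v) ≤ 0) :
    K₁ = K₂ :=
  le_antisymm
    (not_lt.1 (IsSeparatingConstant.reaction_not_lt ha hb hq habcd hK₂.le h₂ h₁))
    (not_lt.1 (IsSeparatingConstant.reaction_not_lt ha hb hq habcd hK₁.le h₁ h₂))

/-- uniqueness of the proportionality constant K when a·b ≥ c·d. -/
theorem stmt_1 (a b c d p q r : ℝ)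
    (ha : 0 < a) (hb : 0 < b) (hc : 0 ≤ c) (hd : 0 ≤ d)
    (hp : 0 ≤ p) (hr : 0 ≤ r) (hq : 0 < q) (hqpr : |p - r| ≤ q)
    (habcd : c * d ≤ a * b) (K₁ K₂ : ℝ) (hK₁ : 0 < K₁) (hK₂ : 0 < K₂)
    (h₁ : ∀ u v : ℝ, 0 ≤ u → 0 ≤ v →
      (u ^ r * v ^ p * (a * v ^ q - c * u ^ q)
        - K₁ * (v ^ r * u ^ p * (b * u ^ q - d * v ^ q))) * (u - K₁ * v) ≤ 0)
    (h₂ : ∀ u v : ℝ, 0 ≤ u → 0 ≤ v →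
      (u ^ r * v ^ p * (a * v ^ q - c * u ^ q)
        - K₂ * (v ^ r * u ^ p * (b * u ^ q - d * v ^ q))) * (u - K₂ * v) ≤ 0) :
    K₁ = K₂ :=
  stmt_1_general a b c d p q r ha hb hq habcd K₁ K₂ hK₁ hK₂ h₁ h₂
end

section
/- Let a, b, c, d, p, q, r be real numbers with a > 0, b > 0, c ≥ 0, d ≥ 0, p ≥ 0, r ≥ 0, q > 0, q ≥ |p − r| and a·b ≥ c·d. Define f(u,v) = u^r v^p (a v^q − c u^q) and g(u,v) = v^r u^p (b u^q − d v^q) for u, v ≥ 0, and let K > 0 be the unique constant with (f(u,v) − K g(u,v))·(u − K v) ≤ 0 for all u, v ≥ 0. Then K = 1 if and only if a + d = b + c, and K > 1 if and only if a + d > b + c. -/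
/-!
Setting `v = 1` in the defining inequality gives `φ(u) (u - K) ≤ 0` for all `u ≥ 0`, where
`φ(u) = f(u, 1) - K g(u, 1)`. Since `φ` is continuous at `K` and changes sign there, `φ(K) = 0`;
at `u = 1` the inequality reads `((a - c) - K (b - d)) (1 - K) ≤ 0`. If `K - 1` and
`(a + d) - (b + c)` did not have the same strict sign, these two facts would force `a ≤ c` and
`b ≤ d`, hence `a = c` and `b = d` by `c d ≤ a b`, and then `φ(K) = 0` factors as
`(1 - K^q) (a K^r + b K^(p+1)) = 0`, i.e. `K = 1`.
-/

open Filter Topology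

lemma eq_zero_of_mul_sub_nonpos {f : ℝ → ℝ} {x₀ : ℝ} (hf : ContinuousAt f x₀)
    (h : ∀ᶠ x in 𝓝 x₀, f x * (x - x₀) ≤ 0) : f x₀ = 0 := by
  apply le_antisymm
  · refine le_of_tendsto (hf.tendsto.mono_left nhdsWithin_le_nhds : Tendsto f (𝓝[>] x₀) _) ?_
    filter_upwards [nhdsWithin_le_nhds h, self_mem_nhdsWithin] with x hx (hgt : x₀ < x)
    exact nonpos_of_mul_nonpos_left hx (sub_pos.mpr hgt)
  · refine ge_of_tendsto (hf.tendsto.mono_left nhdsWithin_le_nhds : Tendsto f (𝓝[<] x₀) _) ?_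
    filter_upwards [nhdsWithin_le_nhds h, self_mem_nhdsWithin] with x hx (hlt : x < x₀)
    exact nonneg_of_mul_nonpos_left hx (sub_neg.mpr hlt)

lemma eq_and_eq_of_le_of_le_of_mul_le {a b c d : ℝ} (ha : 0 < a) (hb : 0 < b) (hac : a ≤ c)
    (hbd : b ≤ d) (h : c * d ≤ a * b) : c = a ∧ d = b := by
  constructor <;> nlinarith [mul_le_mul hac hbd hb.le (ha.le.trans hac)]

lemma nonpos_and_nonpos_of_mul_one_sub {s t K : ℝ} (hK : 0 < K) (hK1 : K ≠ 1)
    (h : (s - K * t) * (1 - K) ≤ 0) (h' : 0 ≤ (s - t) * (1 - K)) : s ≤ 0 ∧ t ≤ 0 := by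
  rcases hK1.lt_or_gt with hlt | hgt
  · have : s ≤ K * t := nonpos_of_mul_nonpos_left h (by linarith) |> sub_nonpos.mp
    have : t ≤ s := nonneg_of_mul_nonneg_left h' (by linarith) |> sub_nonneg.mp
    constructor <;> nlinarith
  · have : K * t ≤ s := nonneg_of_mul_nonpos_left h (by linarith) |> sub_nonneg.mp
    have : s ≤ t := nonpos_of_mul_nonneg_left h' (by linarith) |> sub_nonpos.mp
    constructor <;> nlinarith

lemma eq_one_of_rpow_balance {a b p q r K : ℝ} (ha : 0 < a) (hb : 0 < b) (hq : 0 < q)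
    (hK : 0 < K) (h : K ^ r * (a - a * K ^ q) - K * (K ^ p * (b * K ^ q - b)) = 0) : K = 1 := by
  have hfactor : (1 - K ^ q) * (a * K ^ r + b * K * K ^ p) = 0 := by linear_combination h
  have hKq : K ^ q = 1 ^ q := by
    rw [Real.one_rpow]
    linarith [(mul_eq_zero.mp hfactor).resolve_right (by positivity)]
  exact (Real.rpow_left_inj hK.le zero_le_one hq.ne').mp hKq

lemma eq_zero_iff_and_pos_iff_of_mul_pos {x y : ℝ} (h₀ : y = 0 → x = 0)
    (hpos : y ≠ 0 → 0 < y * x) : (y = 0 ↔ x = 0) ∧ (0 < y ↔ 0 < x) := by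
  rcases eq_or_ne y 0 with hy | hy
  · simp [hy, h₀ hy]
  · rcases pos_and_pos_or_neg_and_neg_of_mul_pos (hpos hy) with ⟨hy', hx⟩ | ⟨hy', hx⟩
    · simp [hy', hx, hy, hx.ne']
    · simp [hy, hx.ne, hy'.not_gt, hx.not_gt]

lemma mul_sub_pos_of_ne_one {a b c d p q r K : ℝ} (ha : 0 < a) (hb : 0 < b) (hq : 0 < q)
    (hK : 0 < K) (habcd : c * d ≤ a * b)
    (hbal : K ^ r * (a - c * K ^ q) - K * (K ^ p * (b * K ^ q - d)) = 0)
    (hone : ((a - c) - K * (b - d)) * (1 - K) ≤ 0) (hK1 : K ≠ 1) :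
    0 < (K - 1) * ((a + d) - (b + c)) := by
  by_contra! hsign
  obtain ⟨hac, hbd⟩ := nonpos_and_nonpos_of_mul_one_sub hK hK1 hone
    (by linarith [hsign] : 0 ≤ ((a - c) - (b - d)) * (1 - K))
  obtain ⟨rfl, rfl⟩ := eq_and_eq_of_le_of_le_of_mul_le ha hb (sub_nonpos.mp hac)
    (sub_nonpos.mp hbd) habcd
  exact hK1 (eq_one_of_rpow_balance ha hb hq hK hbal)

theorem stmt_2_general (a b c d p q r : ℝ)
    (ha : 0 < a) (hb : 0 < b)
    (hq : 0 < q)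
    (habcd : c * d ≤ a * b) (K : ℝ) (hK : 0 < K)
    (hKprop : ∀ u v : ℝ, 0 ≤ u → 0 ≤ v →
      (u ^ r * v ^ p * (a * v ^ q - c * u ^ q)
        - K * (v ^ r * u ^ p * (b * u ^ q - d * v ^ q))) * (u - K * v) ≤ 0) :
    (K = 1 ↔ a + d = b + c) ∧ (1 < K ↔ b + c < a + d) := by
  set φ : ℝ → ℝ := fun u => u ^ r * (a - c * u ^ q) - K * (u ^ p * (b * u ^ q - d)) with hφ
  have hsign : ∀ u : ℝ, 0 ≤ u → φ u * (u - K) ≤ 0 := fun u hu => by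
    simpa only [hφ, Real.one_rpow, mul_one, one_mul] using hKprop u 1 hu zero_le_one
  have hbal : φ K = 0 :=
    eq_zero_of_mul_sub_nonpos (by fun_prop (disch := exact Or.inl hK.ne'))
      (mem_of_superset (Ici_mem_nhds hK) hsign)
  have hone : ((a - c) - K * (b - d)) * (1 - K) ≤ 0 := by
    simpa only [hφ, Real.one_rpow, one_mul, mul_one] using hsign 1 zero_le_one
  have hsum_of_eq_one : K - 1 = 0 → (a + d) - (b + c) = 0 := fun h => by
    simp only [hφ, sub_eq_zero.mp h, Real.one_rpow, mul_one, one_mul] at hbal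
    linarith
  simpa only [sub_eq_zero, sub_pos] using eq_zero_iff_and_pos_iff_of_mul_pos hsum_of_eq_one
    fun h => mul_sub_pos_of_ne_one ha hb hq hK habcd hbal hone (sub_ne_zero.mp h)

/-- K = 1 iff a + d = b + c, and K > 1 iff a + d > b + c. -/
theorem stmt_2 (a b c d p q r : ℝ)
    (ha : 0 < a) (hb : 0 < b) (hc : 0 ≤ c) (hd : 0 ≤ d)
    (hp : 0 ≤ p) (hr : 0 ≤ r) (hq : 0 < q) (hqpr : |p - r| ≤ q)
    (habcd : c * d ≤ a * b) (K : ℝ) (hK : 0 < K)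
    (hKprop : ∀ u v : ℝ, 0 ≤ u → 0 ≤ v →
      (u ^ r * v ^ p * (a * v ^ q - c * u ^ q)
        - K * (v ^ r * u ^ p * (b * u ^ q - d * v ^ q))) * (u - K * v) ≤ 0) :
    (K = 1 ↔ a + d = b + c) ∧ (1 < K ↔ b + c < a + d) :=
  stmt_2_general a b c d p q r ha hb hq habcd K hK hKprop
end

section
/- Let a, b, c, d, p, q, r be real numbers with a > 0, b > 0, c ≥ 0, d ≥ 0, p ≥ 0, r ≥ 0, q > 0, q ≥ |p − r| and a·b ≥ c·d. Define f(u,v) = u^r v^p (a v^q − c u^q) and g(u,v) = v^r u^p (b u^q − d v^q) for u, v ≥ 0, and let K > 0 be the unique constant with (f(u,v) − K g(u,v))·(u − K v) ≤ 0 for all u, v ≥ 0. If a·b > c·d then a − c·K^q > 0 and b·K^q − d > 0; if a·b = c·d then a − c·K^q = 0 and b·K^q − d = 0. -/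
/-!
Putting `v = 1`, the function `φ u = f(u,1) - K g(u,1)` changes sign at `u = K` and is continuous
there, so `φ K = 0`, i.e. `K^r (a - c K^q) = K^(p+1) (b K^q - d)`. Hence `A = a - c K^q` and
`B = b K^q - d` are positive multiples of each other, and `b A + c B = a b - c d` forces both to
have the sign of `a b - c d`.
-/

open Filter Topology

theorem eq_zero_of_mul_sub_nonpos_s3 {φ : ℝ → ℝ} {x : ℝ} (hφ : ContinuousAt φ x)
    (h : ∀ᶠ u in 𝓝 x, φ u * (u - x) ≤ 0) : φ x = 0 := by
  apply le_antisymm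
  · refine le_of_tendsto (hφ.mono_left (nhdsWithin_le_nhds (s := Set.Ioi x))) ?_
    filter_upwards [nhdsWithin_le_nhds h, self_mem_nhdsWithin] with u hu (hxu : x < u)
    exact nonpos_of_mul_nonpos_left hu (sub_pos.mpr hxu)
  · refine ge_of_tendsto (hφ.mono_left (nhdsWithin_le_nhds (s := Set.Iio x))) ?_
    filter_upwards [nhdsWithin_le_nhds h, self_mem_nhdsWithin] with u hu (hux : u < x)
    exact nonneg_of_mul_nonpos_left hu (sub_neg.mpr hux)

theorem sign_of_sub_eq_mul_sub {a b c d t μ : ℝ} (hb : 0 < b) (hc : 0 ≤ c) (hμ : 0 < μ)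
    (h : a - c * t = μ * (b * t - d)) :
    (c * d < a * b → 0 < a - c * t ∧ 0 < b * t - d) ∧
    (a * b = c * d → a - c * t = 0 ∧ b * t - d = 0) := by
  have hcoef : 0 < b * μ + c := by positivity
  have hkey : (b * μ + c) * (b * t - d) = a * b - c * d := by linear_combination -b * h
  refine ⟨fun hlt => ?_, fun heq => ?_⟩
  · have hB : 0 < b * t - d := pos_of_mul_pos_right (hkey ▸ sub_pos.mpr hlt) hcoef.le
    exact ⟨h ▸ mul_pos hμ hB, hB⟩
  · have hB : b * t - d = 0 := by
      simpa [hcoef.ne', heq] using hkey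
    exact ⟨by rw [h, hB, mul_zero], hB⟩

theorem stmt_3_general (a b c d p q r : ℝ)
    (hb : 0 < b) (hc : 0 ≤ c) (K : ℝ) (hK : 0 < K)
    (hKprop : ∀ u v : ℝ, 0 ≤ u → 0 ≤ v →
      (u ^ r * v ^ p * (a * v ^ q - c * u ^ q)
        - K * (v ^ r * u ^ p * (b * u ^ q - d * v ^ q))) * (u - K * v) ≤ 0) :
    (c * d < a * b → 0 < a - c * K ^ q ∧ 0 < b * K ^ q - d) ∧
    (a * b = c * d → a - c * K ^ q = 0 ∧ b * K ^ q - d = 0) := by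
  set φ : ℝ → ℝ := fun u => u ^ r * (a - c * u ^ q) - K * (u ^ p * (b * u ^ q - d))
  have hφ : ContinuousAt φ K := by fun_prop (disch := exact Or.inl hK.ne')
  have hsign : ∀ᶠ u in 𝓝 K, φ u * (u - K) ≤ 0 := by
    filter_upwards [lt_mem_nhds hK] with u hu
    simpa [φ] using hKprop u 1 hu.le zero_le_one
  have hroot : K ^ r * (a - c * K ^ q) = K * K ^ p * (b * K ^ q - d) := by
    linear_combination eq_zero_of_mul_sub_nonpos_s3 hφ hsign
  have hKr : 0 < K ^ r := Real.rpow_pos_of_pos hK r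
  refine sign_of_sub_eq_mul_sub (μ := K * K ^ p / K ^ r) hb hc (by positivity) ?_
  rw [div_mul_eq_mul_div, eq_div_iff hKr.ne', ← hroot, mul_comm]

/-- if a·b > c·d then a − c·K^q > 0 and b·K^q − d > 0;
if a·b = c·d then both quantities vanish. -/
theorem stmt_3 (a b c d p q r : ℝ)
    (ha : 0 < a) (hb : 0 < b) (hc : 0 ≤ c) (hd : 0 ≤ d)
    (hp : 0 ≤ p) (hr : 0 ≤ r) (hq : 0 < q) (hqpr : |p - r| ≤ q)
    (habcd : c * d ≤ a * b) (K : ℝ) (hK : 0 < K)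
    (hKprop : ∀ u v : ℝ, 0 ≤ u → 0 ≤ v →
      (u ^ r * v ^ p * (a * v ^ q - c * u ^ q)
        - K * (v ^ r * u ^ p * (b * u ^ q - d * v ^ q))) * (u - K * v) ≤ 0) :
    (c * d < a * b → 0 < a - c * K ^ q ∧ 0 < b * K ^ q - d) ∧
    (a * b = c * d → a - c * K ^ q = 0 ∧ b * K ^ q - d = 0) :=
  stmt_3_general a b c d p q r hb hc K hK hKprop
end

section
/- Let n ≥ 1, p > 1, A > 0, Λ > 0 and set α = 2/(p−1). Then there exists C > 0 such that for every R ≥ 1 the function w_R(x) = C · R^{2α} · (R² − ‖x‖²)^{−α}, defined on the open ball B_R of radius R centered at the origin in ℝⁿ, is convex on B_R and satisfies Λ · Δw_R(x) ≤ (A/(1 + ‖x‖²)) · w_R(x)^p for all x with ‖x‖ < R. -/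
open scoped BigOperators

/-- The Laplacian of `f : ℝⁿ → ℝ` at `x`: the trace of the Hessian, computed
as the sum of the second derivatives in the coordinate directions. -/
noncomputable def laplacian {n : ℕ} (f : EuclideanSpace ℝ (Fin n) → ℝ)
    (x : EuclideanSpace ℝ (Fin n)) : ℝ :=
  ∑ i, fderiv ℝ (fun y => fderiv ℝ f y (EuclideanSpace.single i 1)) x
    (EuclideanSpace.single i 1)

/-!
Write `t = R² - ‖x‖²` and `c = C R^{2α}`. Convexity: `t` is concave and positive on the ball and
`s ↦ s^{-α}` is convex and decreasing on `(0, ∞)`. For the inequality, a direct computation gives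
`Δw = 2αc t^{-α-2} (n t + 2(α+1) ‖x‖²) ≤ (2αn + 4α(α+1)) R² · c t^{-α-2}`, while `α p = α + 2`
turns `w^p` into `C^{p-1} R⁴ · c t^{-α-2}`. Since `1 + ‖x‖² ≤ 2R²` for `R ≥ 1`, it suffices that
`C^{p-1} = 2Λ(2αn + 4α(α+1))/A`.
-/

open Real Set Topology
open scoped RealInnerProductSpace

theorem convexOn_rpow_neg {q : ℝ} (hq : 0 ≤ q) : ConvexOn ℝ (Ioi 0) fun x : ℝ => x ^ (-q) := by
  refine ⟨convex_Ioi 0, fun x hx y hy a b ha hb hab => ?_⟩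
  have hxy : 0 < a • x + b • y := (convex_Ioi 0) hx hy ha hb hab
  have hlog : a • log x + b • log y ≤ log (a • x + b • y) :=
    strictConcaveOn_log_Ioi.concaveOn.2 hx hy ha hb hab
  simp only [smul_eq_mul] at hxy hlog ⊢
  rw [rpow_def_of_pos hxy, rpow_def_of_pos hx, rpow_def_of_pos hy]
  calc exp (log (a * x + b * y) * -q) ≤ exp (a * (log x * -q) + b * (log y * -q)) := by
        gcongr
        nlinarith
    _ ≤ a * exp (log x * -q) + b * exp (log y * -q) := by
        simpa using convexOn_exp.2 (mem_univ (log x * -q)) (mem_univ (log y * -q)) ha hb hab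

theorem ConcaveOn.rpow_neg {E : Type*} [AddCommGroup E] [Module ℝ E] {s : Set E} {f : E → ℝ}
    (hf : ConcaveOn ℝ s f) (hf₀ : ∀ x ∈ s, 0 < f x) {q : ℝ} (hq : 0 ≤ q) :
    ConvexOn ℝ s fun x => f x ^ (-q) := by
  refine ⟨hf.1, fun x hx y hy a b ha hb hab => ?_⟩
  have hcomb : 0 < a • f x + b • f y := (convex_Ioi (0 : ℝ)) (hf₀ x hx) (hf₀ y hy) ha hb hab
  calc f (a • x + b • y) ^ (-q) ≤ (a • f x + b • f y) ^ (-q) :=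
        rpow_le_rpow_of_nonpos hcomb (hf.2 hx hy ha hb hab) (by linarith)
    _ ≤ a • f x ^ (-q) + b • f y ^ (-q) :=
        (convexOn_rpow_neg hq).2 (hf₀ x hx) (hf₀ y hy) ha hb hab

theorem concaveOn_const_sub_norm_sq {E : Type*} [SeminormedAddCommGroup E] [NormedSpace ℝ E]
    (r : ℝ) :
    ConcaveOn ℝ univ fun x : E => r - ‖x‖ ^ 2 := by
  have := ((convexOn_norm convex_univ).pow (fun x _ => norm_nonneg (E := E) x) 2).neg.add_const r
  refine this.congr fun x _ => ?_
  simp only [Pi.add_apply, Pi.pow_apply, Pi.neg_apply]; ring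

theorem convexOn_barrier {E : Type*} [SeminormedAddCommGroup E] [NormedSpace ℝ E] {c a : ℝ}
    (hc : 0 ≤ c) (ha : 0 ≤ a) (R : ℝ) :
    ConvexOn ℝ (Metric.ball (0 : E) R) fun x => c * (R ^ 2 - ‖x‖ ^ 2) ^ (-a) := by
  have hpos (x : E) (hx : x ∈ Metric.ball 0 R) : 0 < R ^ 2 - ‖x‖ ^ 2 := by
    rw [mem_ball_zero_iff] at hx
    nlinarith [norm_nonneg x]
  exact (((concaveOn_const_sub_norm_sq (R ^ 2)).subset (subset_univ _) (convex_ball 0 R)).rpow_neg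
    hpos ha).smul hc

section Barrier

variable {E : Type*} [NormedAddCommGroup E] [InnerProductSpace ℝ E] (c a R : ℝ) {x : E}

theorem hasFDerivAt_barrier (hx : 0 < R ^ 2 - ‖x‖ ^ 2) :
    HasFDerivAt (fun y : E => c * (R ^ 2 - ‖y‖ ^ 2) ^ (-a))
      ((2 * a * c * (R ^ 2 - ‖x‖ ^ 2) ^ (-a - 1)) • innerSL ℝ x) x := by
  have hsq : HasFDerivAt (fun y : E => R ^ 2 - ‖y‖ ^ 2) (-(2 • innerSL ℝ x)) x :=
    (hasStrictFDerivAt_norm_sq x).hasFDerivAt.const_sub _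
  refine ((hsq.rpow_const (Or.inl hx.ne')).const_mul c).congr_fderiv ?_
  ext v
  simp only [FunLike.coe_smul, Pi.smul_apply, neg_apply, smul_eq_mul]
  ring

theorem fderiv_barrier_apply (hx : 0 < R ^ 2 - ‖x‖ ^ 2) (v : E) :
    fderiv ℝ (fun y : E => c * (R ^ 2 - ‖y‖ ^ 2) ^ (-a)) x v
      = 2 * a * c * (R ^ 2 - ‖x‖ ^ 2) ^ (-a - 1) * ⟪x, v⟫ := by
  simp [(hasFDerivAt_barrier c a R hx).fderiv]

theorem fderiv_fderiv_barrier_apply (hx : 0 < R ^ 2 - ‖x‖ ^ 2) (v : E) :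
    fderiv ℝ (fun y => fderiv ℝ (fun y : E => c * (R ^ 2 - ‖y‖ ^ 2) ^ (-a)) y v) x v
      = 2 * a * c * (R ^ 2 - ‖x‖ ^ 2) ^ (-a - 1) * ‖v‖ ^ 2
        + 4 * a * (a + 1) * c * (R ^ 2 - ‖x‖ ^ 2) ^ (-a - 2) * ⟪x, v⟫ ^ 2 := by
  have hnear : ∀ᶠ y in 𝓝 x, 0 < R ^ 2 - ‖y‖ ^ 2 :=
    continuousAt_const.eventually_lt (by fun_prop) hx
  have hderiv : (fun y => fderiv ℝ (fun y : E => c * (R ^ 2 - ‖y‖ ^ 2) ^ (-a)) y v)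
      =ᶠ[𝓝 x] fun y => 2 * a * c * (R ^ 2 - ‖y‖ ^ 2) ^ (-(a + 1)) * ⟪v, y⟫ := by
    filter_upwards [hnear] with y hy
    rw [fderiv_barrier_apply c a R hy, real_inner_comm, neg_add']
  have hprod : HasFDerivAt (fun y => 2 * a * c * (R ^ 2 - ‖y‖ ^ 2) ^ (-(a + 1)) * ⟪v, y⟫) _ x :=
    (hasFDerivAt_barrier (2 * a * c) (a + 1) R hx).mul (innerSL ℝ v).hasFDerivAt
  rw [hderiv.fderiv_eq, hprod.fderiv]
  simp only [add_apply, FunLike.coe_smul, Pi.smul_apply,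
    smul_eq_mul, innerSL_apply_apply, real_inner_self_eq_norm_sq, real_inner_comm v x]
  rw [neg_add', show -a - 1 - 1 = -a - 2 by ring]
  ring

end Barrier

theorem laplacian_barrier {n : ℕ} (c a R : ℝ) {x : EuclideanSpace ℝ (Fin n)}
    (hx : 0 < R ^ 2 - ‖x‖ ^ 2) :
    laplacian (fun y : EuclideanSpace ℝ (Fin n) => c * (R ^ 2 - ‖y‖ ^ 2) ^ (-a)) x
      = n * (2 * a * c * (R ^ 2 - ‖x‖ ^ 2) ^ (-a - 1))
        + 4 * a * (a + 1) * c * (R ^ 2 - ‖x‖ ^ 2) ^ (-a - 2) * ‖x‖ ^ 2 := by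
  have hterm (i : Fin n) := fderiv_fderiv_barrier_apply c a R hx (EuclideanSpace.single i 1)
  simp only [PiLp.norm_single, norm_one, one_pow, mul_one, EuclideanSpace.inner_single_right,
    conj_trivial, one_mul] at hterm
  rw [laplacian, Finset.sum_congr rfl fun i _ => hterm i, Finset.sum_add_distrib,
    Finset.sum_const, ← Finset.mul_sum, ← EuclideanSpace.real_norm_sq_eq]
  simp

theorem laplacian_barrier_le {n : ℕ} {c a R : ℝ} (ha : 0 ≤ a) (hc : 0 ≤ c)
    {x : EuclideanSpace ℝ (Fin n)} (hx : 0 < R ^ 2 - ‖x‖ ^ 2) :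
    laplacian (fun y : EuclideanSpace ℝ (Fin n) => c * (R ^ 2 - ‖y‖ ^ 2) ^ (-a)) x
      ≤ (2 * a * n + 4 * a * (a + 1)) * R ^ 2 * (c * (R ^ 2 - ‖x‖ ^ 2) ^ (-a - 2)) := by
  rw [laplacian_barrier c a R hx, show -a - 1 = -a - 2 + 1 by ring, rpow_add hx, rpow_one]
  have hcS : 0 ≤ c * (R ^ 2 - ‖x‖ ^ 2) ^ (-a - 2) := by positivity
  have hnorm : 0 ≤ ‖x‖ ^ 2 := by positivity
  have hkey : 2 * a * n * (R ^ 2 - ‖x‖ ^ 2) + 4 * a * (a + 1) * ‖x‖ ^ 2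
      ≤ (2 * a * n + 4 * a * (a + 1)) * R ^ 2 := by
    nlinarith [mul_nonneg (mul_nonneg ha (Nat.cast_nonneg (α := ℝ) n)) hnorm,
      mul_nonneg (mul_nonneg ha (by linarith : 0 ≤ a + 1)) hx.le]
  nlinarith [mul_le_mul_of_nonneg_left hkey hcS]

theorem barrier_rpow_eq {C R t α p : ℝ} (hC : 0 < C) (hR : 0 < R) (ht : 0 < t)
    (hαp : α * (p - 1) = 2) :
    (C * R ^ (2 * α) * t ^ (-α)) ^ p
      = C ^ (p - 1) * (R ^ 2) ^ 2 * (C * R ^ (2 * α) * t ^ (-α - 2)) := by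
  rw [mul_rpow (by positivity) (by positivity), mul_rpow hC.le (by positivity), ← rpow_mul hR.le,
    ← rpow_mul ht.le, show 2 * α * p = 2 * α + 4 by linear_combination 2 * hαp,
    show -α * p = -α - 2 by linear_combination -hαp, rpow_add hR, rpow_sub_one hC.ne',
    show (4 : ℝ) = (4 : ℕ) by norm_num, rpow_natCast]
  field_simp

theorem stmt_9_general (n : ℕ) (p A Lam α : ℝ)
    (hp : 1 < p) (hA : 0 < A) (hLam : 0 < Lam) (hα : α = 2 / (p - 1)) :
    ∃ C : ℝ, 0 < C ∧ ∀ R : ℝ, 1 ≤ R →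
      ConvexOn ℝ (Metric.ball (0 : EuclideanSpace ℝ (Fin n)) R)
        (fun x : EuclideanSpace ℝ (Fin n) =>
          C * R ^ (2 * α) * (R ^ 2 - ‖x‖ ^ 2) ^ (-α)) ∧
      ∀ x : EuclideanSpace ℝ (Fin n), ‖x‖ < R →
        Lam * laplacian (fun x : EuclideanSpace ℝ (Fin n) =>
            C * R ^ (2 * α) * (R ^ 2 - ‖x‖ ^ 2) ^ (-α)) x ≤
          A / (1 + ‖x‖ ^ 2) * (C * R ^ (2 * α) * (R ^ 2 - ‖x‖ ^ 2) ^ (-α)) ^ p := by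
  have hp1 : 0 < p - 1 := by linarith
  have hα0 : 0 < α := by rw [hα]; positivity
  have hαp : α * (p - 1) = 2 := by rw [hα]; field_simp
  set B := 2 * α * n + 4 * α * (α + 1)
  refine ⟨(2 * Lam * B / A) ^ (p - 1)⁻¹, by positivity, fun R hR => ?_⟩
  set C := (2 * Lam * B / A) ^ (p - 1)⁻¹
  have hCp : C ^ (p - 1) = 2 * Lam * B / A := rpow_inv_rpow (by positivity) hp1.ne'
  have hR0 : 0 < R := by linarith
  refine ⟨convexOn_barrier (by positivity) hα0.le R, fun x hx => ?_⟩
  have ht : 0 < R ^ 2 - ‖x‖ ^ 2 := by nlinarith [norm_nonneg x]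
  set X := C * R ^ (2 * α) * (R ^ 2 - ‖x‖ ^ 2) ^ (-α - 2)
  calc Lam * laplacian _ x ≤ Lam * (B * R ^ 2 * X) := by
        gcongr
        exact laplacian_barrier_le hα0.le (by positivity) ht
    _ = A / (2 * R ^ 2) * (C ^ (p - 1) * (R ^ 2) ^ 2 * X) := by
        rw [hCp]
        field_simp
    _ ≤ A / (1 + ‖x‖ ^ 2) * (C ^ (p - 1) * (R ^ 2) ^ 2 * X) := by
        have : 0 ≤ X := by positivity
        gcongr
        nlinarith
    _ = _ := by rw [barrier_rpow_eq (by positivity) hR0 ht hαp]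

/-- the Osserman-type barrier
`w_R(x) = C R^{2α} (R² − ‖x‖²)^{−α}`, with `α = 2/(p−1)`, is convex on `B_R`
and satisfies `Λ Δw_R ≤ A (1+‖x‖²)^{−1} w_R^p` on `B_R`, for a suitable `C > 0`
independent of `R ≥ 1`. -/
theorem stmt_9 (n : ℕ) (hn : 1 ≤ n) (p A Lam α : ℝ)
    (hp : 1 < p) (hA : 0 < A) (hLam : 0 < Lam) (hα : α = 2 / (p - 1)) :
    ∃ C : ℝ, 0 < C ∧ ∀ R : ℝ, 1 ≤ R →
      ConvexOn ℝ (Metric.ball (0 : EuclideanSpace ℝ (Fin n)) R)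
        (fun x : EuclideanSpace ℝ (Fin n) =>
          C * R ^ (2 * α) * (R ^ 2 - ‖x‖ ^ 2) ^ (-α)) ∧
      ∀ x : EuclideanSpace ℝ (Fin n), ‖x‖ < R →
        Lam * laplacian (fun x : EuclideanSpace ℝ (Fin n) =>
            C * R ^ (2 * α) * (R ^ 2 - ‖x‖ ^ 2) ^ (-α)) x ≤
          A / (1 + ‖x‖ ^ 2) * (C * R ^ (2 * α) * (R ^ 2 - ‖x‖ ^ 2) ^ (-α)) ^ p :=
  stmt_9_general n p A Lam α hp hA hLam hα
end

section
/- Let K > 0, a > 0, b > 0, c ≥ 0, d ≥ 0, p ≥ 0, r ≥ 0, q > 0 with p + q ≥ 1, a ≥ c·K^q and b·K^q ≥ d. Then there exists a constant C > 0 such that for all u, v ≥ 0: (i) if u ≤ K·v then u^r v^p (a v^q − c u^q) ≥ C · min(u, K·v)^r · |u − K·v|^{p+q}; and (ii) if u ≥ K·v then K · v^r u^p (b u^q − d v^q) ≥ C · min(u, K·v)^r · |u − K·v|^{p+q}. -/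
/-!
Both estimates reduce to one inequality for `0 ≤ y ≤ x`:
`min 1 q * (x - y) ^ (p + q) ≤ x ^ p * (x ^ q - y ^ q)`.
By homogeneity it suffices to take `x = 1`, where it is Bernoulli's inequality for `q ≤ 1`
and `t ^ q ≤ t` for `q ≥ 1`, combined with `(1 - t) ^ (p + q) ≤ 1 - t`.
On `{u ≤ K v}` apply it with `x = K v`, `y = u`; on `{K v ≤ u}` with `x = u`, `y = K v`;
the conditions `c K ^ q ≤ a` and `d ≤ b K ^ q` let the coefficients be compared.
-/

open Real

lemma min_one_mul_one_sub_le_one_sub_rpow {q t : ℝ} (hq : 0 ≤ q) (ht₀ : 0 ≤ t) (ht₁ : t ≤ 1) :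
    min 1 q * (1 - t) ≤ 1 - t ^ q := by
  rcases le_total q 1 with hq₁ | hq₁
  · have h := rpow_one_add_le_one_add_mul_self (s := t - 1) (by linarith) hq hq₁
    rw [add_sub_cancel] at h
    rw [min_eq_right hq₁]
    linarith
  · have h := rpow_le_self_of_le_one ht₀ ht₁ hq₁
    rw [min_eq_left hq₁]
    linarith

lemma min_one_mul_sub_rpow_le_rpow_mul_rpow_sub_rpow {p q x y : ℝ} (hq : 0 ≤ q)
    (hpq : 1 ≤ p + q) (hy : 0 ≤ y) (hyx : y ≤ x) :
    min 1 q * (x - y) ^ (p + q) ≤ x ^ p * (x ^ q - y ^ q) := by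
  rcases (hy.trans hyx).eq_or_lt with rfl | hx
  · rw [le_antisymm hyx hy, sub_self, sub_self, zero_rpow (by linarith), mul_zero, mul_zero]
  set t := y / x
  have ht₀ : 0 ≤ t := div_nonneg hy hx.le
  have ht₁ : t ≤ 1 := div_le_one_of_le₀ hyx hx.le
  have hy_eq : y = x * t := (mul_div_cancel₀ y hx.ne').symm
  have hpow : (1 - t) ^ (p + q) ≤ 1 - t :=
    rpow_le_self_of_le_one (by linarith) (by linarith) hpq
  calc min 1 q * (x - y) ^ (p + q)
      = x ^ (p + q) * (min 1 q * (1 - t) ^ (p + q)) := by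
        rw [hy_eq, ← mul_one_sub, mul_rpow hx.le (by linarith)]
        ring
    _ ≤ x ^ (p + q) * (min 1 q * (1 - t)) := by gcongr
    _ ≤ x ^ (p + q) * (1 - t ^ q) := by
        gcongr
        exact min_one_mul_one_sub_le_one_sub_rpow hq ht₀ ht₁
    _ = x ^ p * (x ^ q - y ^ q) := by
        rw [hy_eq, mul_rpow hx.le ht₀, rpow_add hx]
        ring

lemma mul_min_one_mul_sub_rpow_le {p q x y A B : ℝ} (hq : 0 ≤ q) (hpq : 1 ≤ p + q)
    (hy : 0 ≤ y) (hyx : y ≤ x) (hA : 0 ≤ A) (hBA : B ≤ A) :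
    A * min 1 q * (x - y) ^ (p + q) ≤ x ^ p * (A * x ^ q - B * y ^ q) :=
  calc A * min 1 q * (x - y) ^ (p + q)
      = A * (min 1 q * (x - y) ^ (p + q)) := mul_assoc _ _ _
    _ ≤ A * (x ^ p * (x ^ q - y ^ q)) :=
        mul_le_mul_of_nonneg_left
          (min_one_mul_sub_rpow_le_rpow_mul_rpow_sub_rpow hq hpq hy hyx) hA
    _ ≤ x ^ p * (A * x ^ q - B * y ^ q) := by
        have hBy : B * y ^ q ≤ A * y ^ q := by gcongr
        have hxp : 0 ≤ x ^ p := rpow_nonneg (hy.trans hyx) p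
        nlinarith

section

variable {K p q r u v : ℝ}

lemma estimate_of_le_mul (a c : ℝ) (hK : 0 < K) (ha : 0 ≤ a) (hq : 0 ≤ q) (hpq : 1 ≤ p + q)
    (hacK : c * K ^ q ≤ a) (hu : 0 ≤ u) (hv : 0 ≤ v) (huv : u ≤ K * v) :
    a / K ^ q * min 1 q / K ^ p * u ^ r * (K * v - u) ^ (p + q) ≤
      u ^ r * v ^ p * (a * v ^ q - c * u ^ q) := by
  have hKq : 0 < K ^ q := rpow_pos_of_pos hK q
  have h := mul_min_one_mul_sub_rpow_le hq hpq hu huv (div_nonneg ha hKq.le)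
    ((le_div_iff₀ hKq).mpr hacK)
  have hav : a / K ^ q * (K * v) ^ q = a * v ^ q := by
    rw [mul_rpow hK.le hv]
    field_simp
  rw [hav, mul_rpow hK.le hv] at h
  calc a / K ^ q * min 1 q / K ^ p * u ^ r * (K * v - u) ^ (p + q)
      = u ^ r * (a / K ^ q * min 1 q * (K * v - u) ^ (p + q)) / K ^ p := by ring
    _ ≤ u ^ r * (K ^ p * v ^ p * (a * v ^ q - c * u ^ q)) / K ^ p := by gcongr
    _ = u ^ r * v ^ p * (a * v ^ q - c * u ^ q) := by
        field_simp

lemma estimate_of_mul_le (b d : ℝ) (hK : 0 < K) (hb : 0 ≤ b) (hq : 0 ≤ q) (hpq : 1 ≤ p + q)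
    (hbKd : d ≤ b * K ^ q) (hv : 0 ≤ v) (hvu : K * v ≤ u) :
    K * b * min 1 q / K ^ r * (K * v) ^ r * (u - K * v) ^ (p + q) ≤
      K * (v ^ r * u ^ p * (b * u ^ q - d * v ^ q)) := by
  have hKq : 0 < K ^ q := rpow_pos_of_pos hK q
  have h := mul_min_one_mul_sub_rpow_le hq hpq (by positivity) hvu hb
    ((div_le_iff₀ hKq).mpr hbKd)
  have hdv : d / K ^ q * (K * v) ^ q = d * v ^ q := by
    rw [mul_rpow hK.le hv]
    field_simp
  rw [hdv] at h
  calc K * b * min 1 q / K ^ r * (K * v) ^ r * (u - K * v) ^ (p + q)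
      = K * v ^ r * (b * min 1 q * (u - K * v) ^ (p + q)) := by
        rw [mul_rpow hK.le hv]
        field_simp
    _ ≤ K * v ^ r * (u ^ p * (b * u ^ q - d * v ^ q)) := by gcongr
    _ = K * (v ^ r * u ^ p * (b * u ^ q - d * v ^ q)) := by ring

end

theorem stmt_10_general (K a b c d p q r : ℝ) (hK : 0 < K)
    (ha : 0 < a) (hb : 0 < b)
    (hq : 0 < q) (hpq : 1 ≤ p + q)
    (hacK : c * K ^ q ≤ a) (hbKd : d ≤ b * K ^ q) :
    ∃ C : ℝ, 0 < C ∧ ∀ u v : ℝ, 0 ≤ u → 0 ≤ v →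
      (u ≤ K * v →
        C * min u (K * v) ^ r * |u - K * v| ^ (p + q) ≤
          u ^ r * v ^ p * (a * v ^ q - c * u ^ q)) ∧
      (K * v ≤ u →
        C * min u (K * v) ^ r * |u - K * v| ^ (p + q) ≤
          K * (v ^ r * u ^ p * (b * u ^ q - d * v ^ q))) := by
  set C₁ := a / K ^ q * min 1 q / K ^ p
  set C₂ := K * b * min 1 q / K ^ r
  have hC₁ : 0 < C₁ := by positivity
  have hC₂ : 0 < C₂ := by positivity
  refine ⟨min C₁ C₂, lt_min hC₁ hC₂, fun u v hu hv => ⟨fun huv => ?_, fun hvu => ?_⟩⟩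
  · rw [min_eq_left huv, abs_of_nonpos (sub_nonpos.mpr huv), neg_sub]
    calc min C₁ C₂ * u ^ r * (K * v - u) ^ (p + q)
        ≤ C₁ * u ^ r * (K * v - u) ^ (p + q) := by
          gcongr
          exact min_le_left _ _
      _ ≤ _ := estimate_of_le_mul a c hK ha.le hq.le hpq hacK hu hv huv
  · rw [min_eq_right hvu, abs_of_nonneg (sub_nonneg.mpr hvu)]
    calc min C₁ C₂ * (K * v) ^ r * (u - K * v) ^ (p + q)
        ≤ C₂ * (K * v) ^ r * (u - K * v) ^ (p + q) := by
          gcongr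
          exact min_le_right _ _
      _ ≤ _ := estimate_of_mul_le b d hK hb.le hq.le hpq hbKd hv hvu

/-- pointwise algebraic estimate giving
`f(u,v) ≥ C Z^r W^{p+q}` on `{u ≤ Kv}` and `K g(u,v) ≥ C Z^r W^{p+q}`
on `{u ≥ Kv}`, where `Z = min(u, Kv)`, `W = |u − Kv|`, when `p + q ≥ 1`. -/
theorem stmt_10 (K a b c d p q r : ℝ) (hK : 0 < K)
    (ha : 0 < a) (hb : 0 < b) (hc : 0 ≤ c) (hd : 0 ≤ d)
    (hp : 0 ≤ p) (hr : 0 ≤ r) (hq : 0 < q) (hpq : 1 ≤ p + q)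
    (hacK : c * K ^ q ≤ a) (hbKd : d ≤ b * K ^ q) :
    ∃ C : ℝ, 0 < C ∧ ∀ u v : ℝ, 0 ≤ u → 0 ≤ v →
      (u ≤ K * v →
        C * min u (K * v) ^ r * |u - K * v| ^ (p + q) ≤
          u ^ r * v ^ p * (a * v ^ q - c * u ^ q)) ∧
      (K * v ≤ u →
        C * min u (K * v) ^ r * |u - K * v| ^ (p + q) ≤
          K * (v ^ r * u ^ p * (b * u ^ q - d * v ^ q))) :=
  stmt_10_general K a b c d p q r hK ha hb hq hpq hacK hbKd
end

section
/- Let K > 0, ε > 0, a > 0, b > 0, c ≥ 0, d ≥ 0, p ≥ 0, r ≥ 0, q > 0 with a ≥ c·K^q + ε and b·K^q ≥ d + ε. Then there exists a constant C > 0 (one may take C = ε·min(K^{−p−q}, K^{1−q−r})) such that for all u, v ≥ 0: (i) if u ≤ K·v then u^r v^p (a v^q − c u^q) ≥ C · min(u, K·v)^{p+q+r}; and (ii) if u ≥ K·v then K · v^r u^p (b u^q − d v^q) ≥ C · min(u, K·v)^{p+q+r}. -/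
/-!
If `0 ≤ x ≤ y` and `γ + δ ≤ α` with `γ ≥ 0`, then `α y^q - γ x^q ≥ δ y^q`, and trading
`x^(p+q)` for `y^(p+q)` gives `δ x^(p+q+r) ≤ x^r y^p (α y^q - γ x^q)`. On `u ≤ K v` this is applied
to `x = u`, `y = K v`; on `K v ≤ u` to `x = K v`, `y = u`. The margins `a - c K^q ≥ ε` and
`b K^q - d ≥ ε` become `γ + δ ≤ α` after dividing by `K^q`, and undoing the rescaling by powers
of `K` produces the constant `ε min(K^(-p-q), K^(1-q-r))`.
-/

open Real

theorem mul_rpow_le_rpow_mul_rpow_mul_sub {x y α γ δ p q r : ℝ} (hx : 0 ≤ x) (hxy : x ≤ y)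
    (hp : 0 ≤ p) (hq : 0 ≤ q) (hr : 0 ≤ r) (hγ : 0 ≤ γ) (hδ : 0 ≤ δ)
    (hαγδ : γ + δ ≤ α) :
    δ * x ^ (p + q + r) ≤ x ^ r * y ^ p * (α * y ^ q - γ * x ^ q) := by
  have hy : 0 ≤ y := hx.trans hxy
  have hgap : δ * y ^ q ≤ α * y ^ q - γ * x ^ q := by
    have hγxy : γ * x ^ q ≤ γ * y ^ q := by gcongr
    nlinarith [rpow_nonneg hy q]
  calc δ * x ^ (p + q + r) = δ * (x ^ r * x ^ (p + q)) := by
        rw [add_comm, rpow_add_of_nonneg hx hr (by positivity)]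
    _ ≤ δ * (x ^ r * y ^ (p + q)) := by gcongr
    _ = x ^ r * y ^ p * (δ * y ^ q) := by rw [rpow_add_of_nonneg hy hp hq]; ring
    _ ≤ x ^ r * y ^ p * (α * y ^ q - γ * x ^ q) := by gcongr

theorem mul_rpow_le_of_le_mul {K ε a c p q r u v : ℝ} (hK : 0 < K) (hε : 0 ≤ ε) (hc : 0 ≤ c)
    (hp : 0 ≤ p) (hq : 0 ≤ q) (hr : 0 ≤ r) (hacK : c * K ^ q + ε ≤ a)
    (hu : 0 ≤ u) (hv : 0 ≤ v) (huv : u ≤ K * v) :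
    ε * K ^ (-(p + q)) * u ^ (p + q + r) ≤ u ^ r * v ^ p * (a * v ^ q - c * u ^ q) := by
  have hKq : 0 < K ^ q := rpow_pos_of_pos hK q
  have hKp : 0 < K ^ p := rpow_pos_of_pos hK p
  have key := mul_rpow_le_rpow_mul_rpow_mul_sub (α := a / K ^ q) (δ := ε / K ^ q)
    hu huv hp hq hr hc (by positivity)
    (by rw [le_div_iff₀ hKq, add_mul, div_mul_cancel₀ _ hKq.ne']; linarith)
  have hav : a / K ^ q * (K ^ q * v ^ q) = a * v ^ q := by field_simp
  rw [mul_rpow hK.le hv, mul_rpow hK.le hv, hav] at key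
  rw [rpow_neg hK.le, rpow_add_of_nonneg hK.le hp hq]
  calc ε * (K ^ p * K ^ q)⁻¹ * u ^ (p + q + r)
      = (K ^ p)⁻¹ * (ε / K ^ q * u ^ (p + q + r)) := by field_simp
    _ ≤ (K ^ p)⁻¹ * (u ^ r * (K ^ p * v ^ p) * (a * v ^ q - c * u ^ q)) := by gcongr
    _ = _ := by field_simp

theorem mul_rpow_le_of_mul_le {K ε b d p q r u v : ℝ} (hK : 0 < K) (hε : 0 ≤ ε) (hd : 0 ≤ d)
    (hp : 0 ≤ p) (hq : 0 ≤ q) (hr : 0 ≤ r) (hbKd : d + ε ≤ b * K ^ q)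
    (hv : 0 ≤ v) (hvu : K * v ≤ u) :
    ε * K ^ (1 - q - r) * (K * v) ^ (p + q + r) ≤
      K * (v ^ r * u ^ p * (b * u ^ q - d * v ^ q)) := by
  have hKq : 0 < K ^ q := rpow_pos_of_pos hK q
  have hKr : 0 < K ^ r := rpow_pos_of_pos hK r
  have key := mul_rpow_le_rpow_mul_rpow_mul_sub (α := b) (γ := d / K ^ q) (δ := ε / K ^ q)
    (by positivity) hvu hp hq hr (by positivity) (by positivity)
    (by rw [← add_div, div_le_iff₀ hKq]; linarith)
  have hdv : d / K ^ q * (K ^ q * v ^ q) = d * v ^ q := by field_simp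
  rw [mul_rpow (z := r) hK.le hv, mul_rpow (z := q) hK.le hv, hdv] at key
  rw [sub_sub, rpow_sub hK, rpow_one, rpow_add hK]
  calc ε * (K / (K ^ q * K ^ r)) * (K * v) ^ (p + q + r)
      = K / K ^ r * (ε / K ^ q * (K * v) ^ (p + q + r)) := by field_simp
    _ ≤ K / K ^ r * (K ^ r * v ^ r * u ^ p * (b * u ^ q - d * v ^ q)) := by gcongr
    _ = _ := by field_simp

theorem stmt_11_general (K ε a b c d p q r : ℝ) (hK : 0 < K) (hε : 0 < ε)
    (hc : 0 ≤ c) (hd : 0 ≤ d)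
    (hp : 0 ≤ p) (hr : 0 ≤ r) (hq : 0 < q)
    (hacK : c * K ^ q + ε ≤ a) (hbKd : d + ε ≤ b * K ^ q) :
    ∃ C : ℝ, 0 < C ∧ ∀ u v : ℝ, 0 ≤ u → 0 ≤ v →
      (u ≤ K * v →
        C * min u (K * v) ^ (p + q + r) ≤
          u ^ r * v ^ p * (a * v ^ q - c * u ^ q)) ∧
      (K * v ≤ u →
        C * min u (K * v) ^ (p + q + r) ≤
          K * (v ^ r * u ^ p * (b * u ^ q - d * v ^ q))) := by
  refine ⟨ε * min (K ^ (-(p + q))) (K ^ (1 - q - r)), by positivity,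
    fun u v hu hv => ⟨fun huv => ?_, fun hvu => ?_⟩⟩
  · rw [min_eq_left huv]
    calc _ ≤ ε * K ^ (-(p + q)) * u ^ (p + q + r) := by gcongr; exact min_le_left _ _
      _ ≤ _ := mul_rpow_le_of_le_mul hK hε.le hc hp hq.le hr hacK hu hv huv
  · rw [min_eq_right hvu]
    calc _ ≤ ε * K ^ (1 - q - r) * (K * v) ^ (p + q + r) := by
          gcongr; exact min_le_right _ _
      _ ≤ _ := mul_rpow_le_of_mul_le hK hε.le hd hp hq.le hr hbKd hv hvu

/-- pointwise algebraic estimate giving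
`f(u,v) ≥ C Z^{p+q+r}` on `{u ≤ Kv}` and `K g(u,v) ≥ C Z^{p+q+r}` on
`{u ≥ Kv}`, where `Z = min(u, Kv)`, when `a ≥ cK^q + ε` and `bK^q ≥ d + ε`. -/
theorem stmt_11 (K ε a b c d p q r : ℝ) (hK : 0 < K) (hε : 0 < ε)
    (ha : 0 < a) (hb : 0 < b) (hc : 0 ≤ c) (hd : 0 ≤ d)
    (hp : 0 ≤ p) (hr : 0 ≤ r) (hq : 0 < q)
    (hacK : c * K ^ q + ε ≤ a) (hbKd : d + ε ≤ b * K ^ q) :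
    ∃ C : ℝ, 0 < C ∧ ∀ u v : ℝ, 0 ≤ u → 0 ≤ v →
      (u ≤ K * v →
        C * min u (K * v) ^ (p + q + r) ≤
          u ^ r * v ^ p * (a * v ^ q - c * u ^ q)) ∧
      (K * v ≤ u →
        C * min u (K * v) ^ (p + q + r) ≤
          K * (v ^ r * u ^ p * (b * u ^ q - d * v ^ q))) :=
  stmt_11_general K ε a b c d p q r hK hε hc hd hp hr hq hacK hbKd
end

section
/- Let n ≥ 1, p > 1 and A > 0. If w : ℝⁿ → ℝ is a nonnegative C² function satisfying Δw(x) ≥ (A/(1 + ‖x‖²)) · w(x)^p for all x ∈ ℝⁿ, then w ≡ 0. -/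
open scoped BigOperators

open Filter Topology

/-- 1D second derivative test at a local max. -/
theorem sdt {h h' : ℝ → ℝ} {c : ℝ}
    (hd : ∀ᶠ t in 𝓝 (0:ℝ), HasDerivAt h (h' t) t)
    (hd2 : HasDerivAt h' c 0) (hmax : IsLocalMax h 0) : c ≤ 0 := by
  by_contra hc
  push_neg at hc
  have h'0 : h' 0 = 0 := hmax.hasDerivAt_eq_zero hd.self_of_nhds
  have hslope : Tendsto (fun t : ℝ => h' t / t) (𝓝[≠] 0) (𝓝 c) := by
    have := hasDerivAt_iff_tendsto_slope.mp hd2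
    simpa [slope_fun_def_field, h'0] using this
  have hpos : ∀ᶠ t in 𝓝[>] (0:ℝ), 0 < h' t := by
    have h1 : Tendsto (fun t : ℝ => h' t / t) (𝓝[>] 0) (𝓝 c) :=
      hslope.mono_left (nhdsWithin_mono _ (fun t ht => ne_of_gt ht))
    have h2 : ∀ᶠ t in 𝓝[>] (0:ℝ), 0 < h' t / t :=
      h1.eventually (eventually_gt_nhds hc)
    filter_upwards [h2, self_mem_nhdsWithin] with t ht ht'
    have := mul_pos ht ht'
    rwa [div_mul_cancel₀ _ (ne_of_gt (Set.mem_Ioi.mp ht'))] at this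
  obtain ⟨u, hu0, hu⟩ := mem_nhdsGT_iff_exists_Ioo_subset.mp hpos
  obtain ⟨δ₁, hδ₁, hball₁⟩ := Metric.eventually_nhds_iff.mp hd
  obtain ⟨δ₂, hδ₂, hball₂⟩ := Metric.eventually_nhds_iff.mp hmax
  have hu0' : (0:ℝ) < u := Set.mem_Ioi.mp hu0
  set m : ℝ := min (min u δ₁) δ₂ with hm
  have hmpos : 0 < m := lt_min (lt_min hu0' hδ₁) hδ₂
  set b : ℝ := m / 2 with hb
  have hbpos : 0 < b := by positivity
  have hbm : b < m := half_lt_self hmpos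
  have hbu : b < u := lt_of_lt_of_le hbm ((min_le_left _ _).trans (min_le_left _ _))
  have hbδ₁ : b < δ₁ := lt_of_lt_of_le hbm ((min_le_left _ _).trans (min_le_right _ _))
  have hbδ₂ : b < δ₂ := lt_of_lt_of_le hbm (min_le_right _ _)
  -- h is strictly monotone on [0, b]
  have hderiv : ∀ t ∈ Set.Icc (0:ℝ) b, HasDerivAt h (h' t) t := by
    intro t ht
    apply hball₁
    rw [Real.dist_eq, sub_zero, abs_of_nonneg ht.1]
    exact lt_of_le_of_lt ht.2 hbδ₁
  have hmono : StrictMonoOn h (Set.Icc (0:ℝ) b) := by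
    apply strictMonoOn_of_deriv_pos (convex_Icc _ _)
    · intro t ht
      exact (hderiv t ht).continuousAt.continuousWithinAt
    · intro t ht
      rw [interior_Icc] at ht
      rw [(hderiv t ⟨le_of_lt ht.1, le_of_lt ht.2⟩).deriv]
      exact hu ⟨ht.1, lt_trans ht.2 hbu⟩
  have hlt : h 0 < h b :=
    hmono (Set.left_mem_Icc.mpr (le_of_lt hbpos)) (Set.right_mem_Icc.mpr (le_of_lt hbpos)) hbpos
  have hle : h b ≤ h 0 := by
    apply hball₂
    rw [Real.dist_eq, sub_zero, abs_of_pos hbpos]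
    exact hbδ₂
  linarith

section DerivSec
variable {n : ℕ}
local notation "E" => EuclideanSpace ℝ (Fin n)

theorem lineHasDerivAt (x : E) (e : E) (t : ℝ) :
    HasDerivAt (fun s : ℝ => x + s • e) e t := by
  simpa using ((hasDerivAt_id t).smul_const e).const_add x

theorem lineA {f : E → ℝ} {x : E} (hf : ContDiffAt ℝ 2 f x) (e : E) :
    (∀ᶠ t in 𝓝 (0:ℝ), HasDerivAt (fun s => f (x + s • e)) (fderiv ℝ f (x + t • e) e) t) ∧
    HasDerivAt (fun t : ℝ => fderiv ℝ f (x + t • e) e)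
      (fderiv ℝ (fun y => fderiv ℝ f y e) x e) 0 := by
  have htends : Tendsto (fun t : ℝ => x + t • e) (𝓝 0) (𝓝 x) := by
    have : Continuous (fun t : ℝ => x + t • e) :=
      continuous_const.add (continuous_id.smul continuous_const)
    simpa using this.tendsto 0
  constructor
  · have hev : ∀ᶠ y in 𝓝 x, DifferentiableAt ℝ f y := by
      filter_upwards [hf.eventually (by norm_num)] with y hy
      exact hy.differentiableAt (by norm_num)
    filter_upwards [htends.eventually hev] with t ht
    exact ht.hasFDerivAt.comp_hasDerivAt t (lineHasDerivAt x e t)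
  · have hdf : DifferentiableAt ℝ (fderiv ℝ f) x :=
      (hf.fderiv_right (m := 1) le_rfl).differentiableAt (by norm_num)
    have hg : HasFDerivAt (fun y => fderiv ℝ f y e)
        ((ContinuousLinearMap.apply ℝ ℝ e).comp (fderiv ℝ (fderiv ℝ f) x)) x :=
      (ContinuousLinearMap.apply ℝ ℝ e).hasFDerivAt.comp x hdf.hasFDerivAt
    have e0 : x + (0:ℝ) • e = x := by simp
    rw [← e0] at hg
    have h2 := hg.comp_hasDerivAt 0 (lineHasDerivAt x e 0)
    rw [e0] at hg
    rw [hg.fderiv]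
    rw [e0] at h2
    exact h2
theorem lap_le_of_isLocalMax {w v : E → ℝ} {x : E}
    (hw : ContDiffAt ℝ 2 w x) (hv : ContDiffAt ℝ 2 v x)
    (hmax : IsLocalMax (fun y => w y - v y) x) :
    laplacian w x ≤ laplacian v x := by
  apply Finset.sum_le_sum
  intro i _
  set e : E := EuclideanSpace.single i 1 with he
  have hwA := lineA hw e
  have hvA := lineA hv e
  have htends : Tendsto (fun t : ℝ => x + t • e) (𝓝 0) (𝓝 x) := by
    have : Continuous (fun t : ℝ => x + t • e) :=
      continuous_const.add (continuous_id.smul continuous_const)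
    simpa using this.tendsto 0
  have hmax' : IsLocalMax (fun t : ℝ => w (x + t • e) - v (x + t • e)) 0 := by
    have := htends.eventually hmax
    simpa [IsLocalMax, IsMaxFilter] using this
  have key : fderiv ℝ (fun y => fderiv ℝ w y e) x e
      - fderiv ℝ (fun y => fderiv ℝ v y e) x e ≤ 0 := by
    apply sdt (h' := fun t : ℝ => fderiv ℝ w (x + t • e) e - fderiv ℝ v (x + t • e) e)
    · filter_upwards [hwA.1, hvA.1] with t h1 h2
      exact h1.sub h2
    · exact hwA.2.sub hvA.2
    · exact hmax'
  linarith

end DerivSec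

section OneD
variable {c α T : ℝ}

theorem psiD1 {s : ℝ} (hs : 0 ≤ s) (hG : 0 < T - Real.log (1+s)/2) :
    HasDerivAt (fun u : ℝ => c * (T - Real.log (1+u)/2) ^ (-α))
      ((c*α/2) * (T - Real.log (1+s)/2) ^ (-α-1) / (1+s)) s := by
  have h1s : (0:ℝ) < 1 + s := by linarith
  have hinner : HasDerivAt (fun u : ℝ => T - Real.log (1+u)/2) (-(1/(1+s)/2)) s := by
    have h0 : HasDerivAt (fun u : ℝ => 1 + u) 1 s := (hasDerivAt_id s).const_add 1
    have h1 : HasDerivAt (fun u : ℝ => Real.log (1+u)) (1/(1+s)) s := by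
      simpa using h0.log (ne_of_gt h1s)
    simpa using (h1.div_const 2).const_sub T
  have h2 := (hinner.rpow_const (p := -α) (Or.inl (ne_of_gt hG)))
  have h3 := h2.const_mul c
  refine h3.congr_deriv ?_
  field_simp

theorem psiD2 {s : ℝ} (hs : 0 ≤ s) (hG : 0 < T - Real.log (1+s)/2) :
    HasDerivAt (fun u : ℝ => (c*α/2) * (T - Real.log (1+u)/2) ^ (-α-1) / (1+u))
      ((c*α/2) * ((α+1)/2 * (T - Real.log (1+s)/2) ^ (-α-2) / (1+s)^2
        - (T - Real.log (1+s)/2) ^ (-α-1) / (1+s)^2)) s := by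
  have h1s : (0:ℝ) < 1 + s := by linarith
  have hinner : HasDerivAt (fun u : ℝ => T - Real.log (1+u)/2) (-(1/(1+s)/2)) s := by
    have h0 : HasDerivAt (fun u : ℝ => 1 + u) 1 s := (hasDerivAt_id s).const_add 1
    have h1 : HasDerivAt (fun u : ℝ => Real.log (1+u)) (1/(1+s)) s := by
      simpa using h0.log (ne_of_gt h1s)
    simpa using (h1.div_const 2).const_sub T
  have h2 := (hinner.rpow_const (p := -α-1) (Or.inl (ne_of_gt hG))).const_mul (c*α/2)
  have hden : HasDerivAt (fun u : ℝ => 1 + u) 1 s := (hasDerivAt_id s).const_add 1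
  have h3 := h2.div hden (ne_of_gt h1s)
  refine h3.congr_deriv ?_
  have hexp : (-α-1-1 : ℝ) = -α-2 := by ring
  rw [hexp]
  field_simp
  ring

end OneD

noncomputable def psi1 (c α T s : ℝ) : ℝ :=
  (c*α/2) * (T - Real.log (1+s)/2) ^ (-α-1) / (1+s)

noncomputable def psi2 (c α T s : ℝ) : ℝ :=
  (c*α/2) * ((α+1)/2 * (T - Real.log (1+s)/2) ^ (-α-2) / (1+s)^2
    - (T - Real.log (1+s)/2) ^ (-α-1) / (1+s)^2)

noncomputable def vb (n : ℕ) (c α T : ℝ) (y : EuclideanSpace ℝ (Fin n)) : ℝ :=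
  c * (T - Real.log (1 + ‖y‖^2)/2) ^ (-α)

section Barrier
variable {n : ℕ} {c α T : ℝ}
local notation "E" => EuclideanSpace ℝ (Fin n)

theorem normsq_hasFDerivAt (y : E) :
    HasFDerivAt (fun z : E => ‖z‖^2) (2 • (innerSL ℝ y)) y :=
  (hasStrictFDerivAt_norm_sq y).hasFDerivAt

theorem vb_hasFDerivAt {y : E} (hGy : 0 < T - Real.log (1+‖y‖^2)/2) :
    HasFDerivAt (vb n c α T)
      (psi1 c α T (‖y‖^2) • (2 • (innerSL ℝ y))) y := by
  have h := (psiD1 (c := c) (α := α) (by positivity) hGy).comp_hasFDerivAt y (normsq_hasFDerivAt y)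
  exact h

theorem psi1q_hasFDerivAt {y : E} (hGy : 0 < T - Real.log (1+‖y‖^2)/2) :
    HasFDerivAt (fun z : E => psi1 c α T (‖z‖^2))
      (psi2 c α T (‖y‖^2) • (2 • (innerSL ℝ y))) y := by
  have h := (psiD2 (c := c) (α := α) (by positivity) hGy).comp_hasFDerivAt y (normsq_hasFDerivAt y)
  exact h

theorem vb_second {x : E} (hGx : 0 < T - Real.log (1+‖x‖^2)/2) (i : Fin n) :
    fderiv ℝ (fun y => fderiv ℝ (vb n c α T) y (EuclideanSpace.single i 1)) x
      (EuclideanSpace.single i 1)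
    = 2 * psi1 c α T (‖x‖^2) + 4 * psi2 c α T (‖x‖^2) * (x i)^2 := by
  set e : E := EuclideanSpace.single i 1 with he
  have hcont : ContinuousAt (fun y : E => T - Real.log (1+‖y‖^2)/2) x := by
    have h1 : ContinuousAt (fun y : E => 1 + ‖y‖^2) x := by fun_prop
    have h3 : ContinuousAt (fun y : E => Real.log (1+‖y‖^2)) x :=
      h1.log (by positivity)
    exact (continuousAt_const.sub (h3.div_const 2))
  have hev : ∀ᶠ y in 𝓝 x, 0 < T - Real.log (1+‖y‖^2)/2 :=
    hcont.eventually (eventually_gt_nhds hGx)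
  have heq : (fun y => fderiv ℝ (vb n c α T) y e)
      =ᶠ[𝓝 x] (fun y => psi1 c α T (‖y‖^2) * (2 * (innerSL ℝ e) y)) := by
    filter_upwards [hev] with y hy
    rw [(vb_hasFDerivAt hy).fderiv]
    simp only [ContinuousLinearMap.smul_apply, innerSL_apply_apply, smul_eq_mul,
      real_inner_comm y e]
    ring
  rw [heq.fderiv_eq]
  have hmul := (psi1q_hasFDerivAt (c := c) (α := α) hGx).mul ((innerSL ℝ e).hasFDerivAt.const_mul (2:ℝ))
  erw [hmul.fderiv]
  have hee : (innerSL ℝ e) e = 1 := by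
    simp [he, EuclideanSpace.inner_single_right, EuclideanSpace.single_apply]
  have hxe : (innerSL ℝ e) x = x i := by
    simp [he, EuclideanSpace.inner_single_left]
  have hex : (innerSL ℝ x) e = x i := by
    simp [he, EuclideanSpace.inner_single_right]
  simp only [ContinuousLinearMap.add_apply, ContinuousLinearMap.smul_apply,
    smul_eq_mul, hee, hxe, hex]
  ring

theorem vb_laplacian {x : E} (hGx : 0 < T - Real.log (1+‖x‖^2)/2) :
    laplacian (vb n c α T) x
    = 2 * n * psi1 c α T (‖x‖^2) + 4 * psi2 c α T (‖x‖^2) * ‖x‖^2 := by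
  unfold laplacian
  have hsum : ∀ i ∈ Finset.univ, fderiv ℝ (fun y => fderiv ℝ (vb n c α T) y
      (EuclideanSpace.single i 1)) x (EuclideanSpace.single i 1)
      = 2 * psi1 c α T (‖x‖^2) + 4 * psi2 c α T (‖x‖^2) * (x i)^2 :=
    fun i _ => vb_second hGx i
  rw [Finset.sum_congr rfl hsum, Finset.sum_add_distrib, Finset.sum_const]
  have hnormsq : ∑ i, (x i)^2 = ‖x‖^2 := by
    rw [EuclideanSpace.norm_eq, Real.sq_sqrt (by positivity)]
    simp [sq_abs]
  rw [← Finset.mul_sum, hnormsq]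
  simp
  ring


theorem vb_contDiffAt {x : E} (hGx : 0 < T - Real.log (1+‖x‖^2)/2) :
    ContDiffAt ℝ 2 (vb n c α T) x := by
  have h1 : ContDiffAt ℝ 2 (fun s : ℝ => 1 + s) (‖x‖^2) := by fun_prop
  have h2 : ContDiffAt ℝ 2 (fun s : ℝ => Real.log (1+s)) (‖x‖^2) :=
    h1.log (by positivity)
  have h3 : ContDiffAt ℝ 2 (fun s : ℝ => T - Real.log (1+s)/2) (‖x‖^2) :=
    contDiffAt_const.sub (h2.div_const 2)
  have h4 : ContDiffAt ℝ 2 (fun s : ℝ => c * (T - Real.log (1+s)/2) ^ (-α)) (‖x‖^2) :=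
    (h3.rpow_const_of_ne (ne_of_gt hGx)).const_smul c
  exact h4.comp (f := fun y : E => ‖y‖^2) x ((contDiff_norm_sq (𝕜 := ℝ)).contDiffAt)

theorem vb_pos (hc : 0 < c) {x : E} (hGx : 0 < T - Real.log (1+‖x‖^2)/2) :
    0 < vb n c α T x :=
  mul_pos hc (Real.rpow_pos_of_pos hGx _)

theorem vb_supersol {p A : ℝ} (hp : 1 < p) (hA : 0 < A) (hT : 0 < T)
    (hα : α = 2/(p-1)) (hc : c = ((α*(α+1) + α*n*T)/A) ^ ((1:ℝ)/(p-1)))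
    {x : E} (hGx : 0 < T - Real.log (1+‖x‖^2)/2) :
    laplacian (vb n c α T) x ≤ A / (1 + ‖x‖^2) * (vb n c α T x) ^ p := by
  have hp1 : (0:ℝ) < p - 1 := by linarith
  have hα0 : 0 < α := by rw [hα]; positivity
  set K : ℝ := α*(α+1) + α*n*T with hK
  have hKpos : 0 < K := by
    have : (0:ℝ) ≤ α*n*T := by positivity
    nlinarith
  have hcpos : 0 < c := by rw [hc]; positivity
  have hcp1 : c ^ (p-1) = K / A := by
    rw [hc, ← Real.rpow_mul (div_pos hKpos hA).le,
      show (1/(p-1))*(p-1) = (1:ℝ) by field_simp, Real.rpow_one]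
  set s : ℝ := ‖x‖^2 with hs
  have hs0 : 0 ≤ s := by positivity
  have h1s : (0:ℝ) < 1 + s := by linarith
  set G : ℝ := T - Real.log (1+s)/2 with hGdef
  have hG : 0 < G := hGx
  have hGT : G ≤ T := by
    have : 0 ≤ Real.log (1+s) := Real.log_nonneg (by linarith)
    rw [hGdef]; linarith
  have hAcp : A * c ^ p = K * c := by
    have : (p:ℝ) = (p-1) + 1 := by ring
    rw [this, Real.rpow_add hcpos, hcp1, Real.rpow_one]
    field_simp
  set P : ℝ := G ^ (-α-2) with hP
  have hPpos : 0 < P := Real.rpow_pos_of_pos hG _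
  have hQ : G ^ (-α-1) = G * P := by
    rw [hP, show (-α-1 : ℝ) = 1 + (-α-2) by ring, Real.rpow_add hG, Real.rpow_one]
  have hvpow : (vb n c α T x) ^ p = c ^ p * P := by
    have h1 : (vb n c α T x) = c * G ^ (-α) := rfl
    rw [h1, Real.mul_rpow hcpos.le (Real.rpow_nonneg hG.le _),
      ← Real.rpow_mul hG.le]
    congr 1
    rw [hP]
    congr 1
    rw [hα]; field_simp; ring
  rw [vb_laplacian hGx]
  unfold psi1 psi2
  rw [← hs, ← hGdef, hQ, ← hP, hvpow]
  have hnum : c*α*n*(G*(1+s)) + c*α*(α+1)*s - 2*c*α*(s*G) ≤ A * c^p * (1+s) := by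
    rw [hAcp, hK]
    have e1 : c*α*n*(G*(1+s)) ≤ c*α*n*(T*(1+s)) := by
      apply mul_le_mul_of_nonneg_left _ (by positivity)
      apply mul_le_mul_of_nonneg_right hGT h1s.le
    have e2 : c*α*(α+1)*s ≤ c*α*(α+1)*(1+s) := by
      apply mul_le_mul_of_nonneg_left (by linarith) (by positivity)
    have e3 : (0:ℝ) ≤ 2*c*α*(s*G) := by positivity
    nlinarith
  calc 2 * ↑n * (c*α/2 * (G*P) / (1+s))
        + 4 * (c*α/2 * ((α+1)/2 * P / (1+s)^2 - G*P / (1+s)^2)) * s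
      = (c*α*n*(G*(1+s)) + c*α*(α+1)*s - 2*c*α*(s*G)) * P / (1+s)^2 := by
        field_simp
        ring
    _ ≤ (A * c^p * (1+s)) * P / (1+s)^2 := by
        apply (div_le_div_iff_of_pos_right (by positivity)).mpr
        exact mul_le_mul_of_nonneg_right hnum hPpos.le
    _ = A / (1+s) * (c^p * P) := by
        field_simp

end Barrier


set_option maxHeartbeats 1000000 in
/-- Liouville theorem for the coercive inequality
`Δw ≥ A (1+|x|²)^{-1} w^p` with `p > 1`. -/
theorem stmt_18 (n : ℕ) (hn : 1 ≤ n) (p A : ℝ) (hp : 1 < p) (hA : 0 < A)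
    (w : EuclideanSpace ℝ (Fin n) → ℝ) (hw : ContDiff ℝ 2 w) (hw0 : ∀ x, 0 ≤ w x)
    (hineq : ∀ x, A / (1 + ‖x‖ ^ 2) * w x ^ p ≤ laplacian w x) :
    ∀ x, w x = 0 := by
  intro x₀
  have hp1 : (0:ℝ) < p - 1 := by linarith
  set α : ℝ := 2/(p-1) with hα
  have hα0 : 0 < α := by positivity
  set L₀ : ℝ := Real.log (1 + ‖x₀‖^2)/2 with hL₀
  have hL₀0 : 0 ≤ L₀ := by
    have h : 0 ≤ Real.log (1 + ‖x₀‖^2) := Real.log_nonneg (by nlinarith [norm_nonneg x₀, sq_nonneg ‖x₀‖])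
    rw [hL₀]; linarith
  -- Step 1: comparison with the barrier for every admissible T
  have step1 : ∀ T : ℝ, 0 < T → L₀ < T →
      w x₀ ≤ ((α*(α+1) + α*n*T)/A) ^ ((1:ℝ)/(p-1)) * (T - L₀) ^ (-α) := by
    intro T hT hLT
    set c : ℝ := ((α*(α+1) + α*n*T)/A) ^ ((1:ℝ)/(p-1)) with hc
    have hcpos : 0 < c := by
      rw [hc]
      apply Real.rpow_pos_of_pos
      have h1 : (0:ℝ) < α*(α+1) := by positivity
      have h2 : (0:ℝ) ≤ α*n*T := by positivity
      exact div_pos (by linarith) hA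
    set v : EuclideanSpace ℝ (Fin n) → ℝ := vb n c α T with hv
    have hGx₀ : 0 < T - Real.log (1 + ‖x₀‖^2)/2 := by rw [hL₀] at hLT; linarith
    have hvx₀ : v x₀ = c * (T - L₀) ^ (-α) := rfl
    rw [← hvx₀]
    by_contra hcon
    push_neg at hcon
    -- max of w on the big closed ball
    have hball : IsCompact (Metric.closedBall (0 : EuclideanSpace ℝ (Fin n)) (Real.exp T)) :=
      isCompact_closedBall _ _
    obtain ⟨z, hz, hzmax⟩ := hball.exists_isMaxOn
      ⟨0, Metric.mem_closedBall_self (Real.exp_pos T).le⟩ hw.continuous.continuousOn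
    set W : ℝ := w z with hW
    have hWnn : 0 ≤ W := hw0 z
    -- everything with positive g lies in the big ball
    have hginball : ∀ y : EuclideanSpace ℝ (Fin n), 0 < T - Real.log (1 + ‖y‖^2)/2 →
        y ∈ Metric.closedBall (0 : EuclideanSpace ℝ (Fin n)) (Real.exp T) := by
      intro y hy
      have h1 : Real.log (1 + ‖y‖^2) < 2*T := by linarith
      have h2 : 1 + ‖y‖^2 < Real.exp (2*T) :=
        (Real.log_lt_iff_lt_exp (by positivity)).mp h1
      have h3 : Real.exp (2*T) = Real.exp T * Real.exp T := by
        rw [← Real.exp_add]; ring_nf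
      rw [Metric.mem_closedBall, dist_zero_right]
      nlinarith [norm_nonneg y, Real.exp_pos T]
    -- threshold δ
    set δ₀ : ℝ := (c/(W+1)) ^ ((1:ℝ)/α) with hδ₀
    have hδ₀pos : 0 < δ₀ := Real.rpow_pos_of_pos (div_pos hcpos (by linarith)) _
    set δ : ℝ := min (T - L₀) δ₀ with hδ
    have hδpos : 0 < δ := lt_min (by linarith) hδ₀pos
    -- barrier is large where g is small
    have hvlarge : ∀ y : EuclideanSpace ℝ (Fin n),
        0 < T - Real.log (1 + ‖y‖^2)/2 → T - Real.log (1 + ‖y‖^2)/2 ≤ δ →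
        W + 1 ≤ v y := by
      intro y hy1 hy2
      set u : ℝ := T - Real.log (1 + ‖y‖^2)/2 with hu
      have huδ₀ : u ≤ δ₀ := le_trans hy2 (min_le_right _ _)
      have h1 : u ^ α ≤ δ₀ ^ α := Real.rpow_le_rpow hy1.le huδ₀ hα0.le
      have h2 : δ₀ ^ α = c/(W+1) := by
        rw [hδ₀, ← Real.rpow_mul (div_pos hcpos (by linarith)).le,
          show (1/α)*α = (1:ℝ) by field_simp, Real.rpow_one]
      have h3 : 0 < u ^ α := Real.rpow_pos_of_pos hy1 _
      have h4 : v y = c * (u ^ α)⁻¹ := by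
        rw [hv]
        show c * (T - Real.log (1 + ‖y‖^2)/2) ^ (-α) = c * (u ^ α)⁻¹
        rw [← hu, Real.rpow_neg hy1.le]
      rw [h4]
      have h5 : u ^ α ≤ c/(W+1) := h2 ▸ h1
      have h6 : (u^α) * (W+1) ≤ c := (le_div_iff₀ (by linarith)).mp h5
      calc W + 1 = ((u^α) * (W+1)) * (u^α)⁻¹ := by field_simp
        _ ≤ c * (u^α)⁻¹ := mul_le_mul_of_nonneg_right h6 (by positivity)
    -- compact set containing the max
    set Bset : Set (EuclideanSpace ℝ (Fin n)) :=
      {y | δ ≤ T - Real.log (1 + ‖y‖^2)/2} with hBset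
    have hgcont : Continuous (fun y : EuclideanSpace ℝ (Fin n) =>
        T - Real.log (1 + ‖y‖^2)/2) := by
      have h1 : Continuous (fun y : EuclideanSpace ℝ (Fin n) => 1 + ‖y‖^2) := by fun_prop
      have h2 : Continuous (fun y : EuclideanSpace ℝ (Fin n) => Real.log (1 + ‖y‖^2)) :=
        h1.log (fun y => by positivity)
      exact continuous_const.sub (h2.div_const 2)
    have hclosed : IsClosed Bset := isClosed_le continuous_const hgcont
    have hBsub : Bset ⊆ Metric.closedBall 0 (Real.exp T) := fun y hy =>
      hginball y (lt_of_lt_of_le hδpos hy)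
    have hBcompact : IsCompact Bset := hball.of_isClosed_subset hclosed hBsub
    have hx₀B : x₀ ∈ Bset := by
      have h : δ ≤ T - L₀ := min_le_left _ _
      rw [hL₀] at h
      exact h
    have hvcont : ContinuousOn v Bset := fun y hy =>
      ((vb_contDiffAt (lt_of_lt_of_le hδpos hy)).continuousAt).continuousWithinAt
    have hwv : ContinuousOn (fun y => w y - v y) Bset :=
      (hw.continuous.continuousOn).sub hvcont
    obtain ⟨xs, hxsB, hxsmax⟩ := hBcompact.exists_isMaxOn ⟨x₀, hx₀B⟩ hwv
    have hgxs : 0 < T - Real.log (1 + ‖xs‖^2)/2 := lt_of_lt_of_le hδpos hxsB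
    have hS : 0 < w xs - v xs := by
      have h1 : w x₀ - v x₀ ≤ w xs - v xs := hxsmax hx₀B
      have h0 : v x₀ < w x₀ := hcon
      linarith
    have hmax : IsLocalMax (fun y => w y - v y) xs := by
      have hUopen : IsOpen {y : EuclideanSpace ℝ (Fin n) |
          0 < T - Real.log (1 + ‖y‖^2)/2} := isOpen_lt continuous_const hgcont
      filter_upwards [hUopen.mem_nhds hgxs] with y hy
      by_cases hyB : y ∈ Bset
      · exact hxsmax hyB
      · have hyδ : T - Real.log (1 + ‖y‖^2)/2 ≤ δ := le_of_not_ge hyB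
        have h1 : W + 1 ≤ v y := hvlarge y hy hyδ
        have h2 : w y ≤ W := hzmax (hginball y hy)
        show w y - v y ≤ w xs - v xs
        linarith
    have hlap : laplacian w xs ≤ laplacian v xs :=
      lap_le_of_isLocalMax (hw.contDiffAt) (vb_contDiffAt hgxs) hmax
    have hsupv : laplacian v xs ≤ A / (1 + ‖xs‖^2) * (v xs) ^ p :=
      vb_supersol hp hA hT hα hc hgxs
    have hws := hineq xs
    have hvw : v xs < w xs := by linarith
    have hvpos : 0 < v xs := vb_pos hcpos hgxs
    have hApos : 0 < A / (1 + ‖xs‖^2) := by positivity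
    have hpow : v xs ^ p < w xs ^ p := Real.rpow_lt_rpow hvpos.le hvw (by linarith)
    nlinarith [mul_lt_mul_of_pos_left hpow hApos]
  -- Step 2: send T to infinity
  set β : ℝ := 1/(p-1) with hβ
  have hβ0 : 0 < β := by positivity
  have hαβ : α = 2*β := by rw [hα, hβ]; ring
  set K₂ : ℝ := α * n with hK₂
  have hK₂pos : 0 < K₂ := by
    have : (1:ℝ) ≤ (n:ℝ) := by exact_mod_cast hn
    rw [hK₂]; positivity
  set K₁ : ℝ := α * (α+1) with hK₁
  have hK₁pos : 0 < K₁ := by rw [hK₁]; positivity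
  set B : ℝ → ℝ := fun T => ((K₁ + K₂*T)/A) ^ β * (T - L₀) ^ (-α) with hB
  have hwB : ∀ᶠ T in Filter.atTop, w x₀ ≤ B T := by
    filter_upwards [Filter.eventually_gt_atTop (max L₀ 0)] with T hT
    have h1 : L₀ < T := lt_of_le_of_lt (le_max_left _ _) hT
    have h2 : 0 < T := lt_of_le_of_lt (le_max_right _ _) hT
    exact step1 T h2 h1
  have hbound : ∀ᶠ T in Filter.atTop,
      B T ≤ (4*K₂/A) ^ β * (T - L₀) ^ (-β) := by
    filter_upwards [Filter.eventually_ge_atTop (max (2*L₀ + 1) (K₁/K₂))] with T hT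
    have hT1 : 2*L₀ + 1 ≤ T := le_trans (le_max_left _ _) hT
    have hT2 : K₁/K₂ ≤ T := le_trans (le_max_right _ _) hT
    have hTL : 0 < T - L₀ := by linarith
    have hnum : K₁ + K₂*T ≤ 4*K₂*(T - L₀) := by
      have e1 : K₁ ≤ T * K₂ := (div_le_iff₀ hK₂pos).mp hT2
      have e2 : K₂ * (2*L₀) ≤ K₂ * T :=
        mul_le_mul_of_nonneg_left (by linarith) hK₂pos.le
      linarith
    have hd : (K₁ + K₂*T)/A ≤ (4*K₂/A)*(T - L₀) := by
      rw [div_mul_eq_mul_div]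
      exact (div_le_div_iff_of_pos_right hA).mpr hnum
    have hbase : (0:ℝ) ≤ (K₁ + K₂*T)/A := by
      have h0 : 0 < K₂ * T := mul_pos hK₂pos (by linarith)
      have : 0 < K₁ + K₂*T := by linarith
      positivity
    have h3 : ((K₁ + K₂*T)/A) ^ β ≤ ((4*K₂/A)*(T - L₀)) ^ β :=
      Real.rpow_le_rpow hbase hd hβ0.le
    have h4 : ((4*K₂/A)*(T - L₀)) ^ β = (4*K₂/A) ^ β * (T - L₀) ^ β :=
      Real.mul_rpow (by positivity) hTL.le
    have h5 : (T - L₀) ^ β * (T - L₀) ^ (-α) = (T - L₀) ^ (-β) := by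
      rw [← Real.rpow_add hTL, hαβ]
      congr 1
      ring
    rw [hB]
    calc ((K₁ + K₂*T)/A) ^ β * (T - L₀) ^ (-α)
        ≤ ((4*K₂/A)*(T - L₀)) ^ β * (T - L₀) ^ (-α) :=
          mul_le_mul_of_nonneg_right h3 (Real.rpow_nonneg hTL.le _)
      _ = (4*K₂/A) ^ β * ((T - L₀) ^ β * (T - L₀) ^ (-α)) := by rw [h4]; ring
      _ = (4*K₂/A) ^ β * (T - L₀) ^ (-β) := by rw [h5]
  have hBnn : ∀ᶠ T in Filter.atTop, 0 ≤ B T := by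
    filter_upwards [Filter.eventually_gt_atTop (max L₀ 0)] with T hT
    have h1 : L₀ < T := lt_of_le_of_lt (le_max_left _ _) hT
    have h2 : 0 < T := lt_of_le_of_lt (le_max_right _ _) hT
    exact le_trans (hw0 x₀) (step1 T h2 h1)
  have htendbound : Filter.Tendsto (fun T => (4*K₂/A) ^ β * (T - L₀) ^ (-β))
      Filter.atTop (𝓝 0) := by
    have h1 : Filter.Tendsto (fun T : ℝ => T - L₀) Filter.atTop Filter.atTop :=
      Filter.tendsto_atTop_add_const_right _ _ Filter.tendsto_id
    have h2 : Filter.Tendsto (fun u : ℝ => u ^ (-β)) Filter.atTop (𝓝 0) :=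
      tendsto_rpow_neg_atTop hβ0
    have h3 := (h2.comp h1).const_mul ((4*K₂/A) ^ β)
    simpa using h3
  have hBtend : Filter.Tendsto B Filter.atTop (𝓝 0) :=
    squeeze_zero' hBnn hbound htendbound
  have hfin : w x₀ ≤ 0 := ge_of_tendsto hBtend hwB
  exact le_antisymm hfin (hw0 x₀)
end
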